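/- arXiv:math/0410090 — 8 statements merged into one kernel-verified Lean document; each statement's English description precedes it below -/
import Mathlib

section
/- If $N-1$ is an odd prime power, $q$ is an even divisor of $N-2$, $x$ is a primitive element of $\mathrm{GF}(N-1)$, and $T \subseteq \mathbb{Z}_q$ has size $q/2$, then the multiset union over $r = 0, \dots, q-1$ of all differences $u - v$ with $u \neq v$ ranging over the set $S_{r,0} = \{x^{jq+i} : 0 \le j \le (N-2)/q - 1,\ i \in T + r \pmod q\}$ covers each nonzero element of $\mathrm{GF}(N-1)$ exactly $\frac{q}{2}\left(\frac{N-2}{2} - 1\right)$ times. In other words, $\{S_{r,0} : 0 \le r \le q-1\}$ is a difference family in $\mathrm{GF}(N-1)$. -/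
/-!
Write `d = u - v` with `u, v` in a block. Taking `v = x ^ j` and `u / v = x ^ k`, the pair lies
in the block `S_{r,0}` exactly when `j - r` and `j + k - r` both lie in `T` modulo `q`, so summed
over `r` the pair is counted `#{t ∈ T | t + k ∈ T}` times (indices in `ℤ_q`). As `v` ranges over
`F ∖ {0, -d}`, `u / v = 1 + d / v` ranges over `F ∖ {0, 1}`, i.e. `k` over `1, …, N - 3`. Since
`q ∣ N - 2`, the residues of `0, …, N - 3` cover `ℤ_q` exactly `(N - 2) / q` times, and
`∑ s, #{t ∈ T | t + s ∈ T} = |T| ^ 2`; dropping `k = 0` leaves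
`((N - 2) / q) (q / 2) ^ 2 - q / 2`.
-/

open Finset

section DiffCount

variable {G : Type*} [AddCommGroup G] [DecidableEq G]

def diffCount (A : Finset G) (s : G) : ℕ := #{t ∈ A | t + s ∈ A}

theorem card_filter_pair_sub_eq_diffCount {A : Finset G} {d : G} (hd : d ≠ 0) :
    #{p ∈ A ×ˢ A | p.1 ≠ p.2 ∧ p.1 - p.2 = d} = diffCount A d := by
  refine card_nbij' Prod.snd (fun t => (t + d, t)) ?_ ?_ ?_ fun _ _ => rfl
  · rintro ⟨u, v⟩ h
    simp only [coe_filter, mem_product, Set.mem_ofPred_eq] at h ⊢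
    obtain ⟨⟨hu, hv⟩, -, rfl⟩ := h
    simpa [hv] using hu
  · intro t h
    simp only [coe_filter, mem_product, Set.mem_ofPred_eq] at h ⊢
    exact ⟨⟨h.2, h.1⟩, by simpa using hd, add_sub_cancel_left t d⟩
  · rintro ⟨u, v⟩ h
    simp only [coe_filter, mem_product, Set.mem_ofPred_eq] at h
    obtain ⟨-, -, rfl⟩ := h
    simp

theorem sum_diffCount [Fintype G] (A : Finset G) : ∑ s, diffCount A s = #A ^ 2 := by
  have hrow : ∀ t, #{s | t + s ∈ A} = #A := fun t =>
    card_equiv (Equiv.addLeft t) (by simp)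
  simp_rw [diffCount, card_filter]
  rw [sum_comm]
  simp_rw [← card_filter, hrow, sum_const, smul_eq_mul, sq]

theorem card_sub_mem_and_add_sub_mem [Fintype G] (A : Finset G) (a s : G) :
    #{r | a - r ∈ A ∧ a + s - r ∈ A} = diffCount A s :=
  card_equiv (Equiv.subLeft a) (by simp [add_sub_right_comm])

theorem sum_diffCount_eq_sum_card_filter [Fintype G] {ι : Type*}
    (B : ι → Finset G) (I : Finset ι) (d : G) :
    ∑ r ∈ I, diffCount (B r) d = ∑ v, #{r ∈ I | v ∈ B r ∧ v + d ∈ B r} := by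
  simp_rw [diffCount, card_filter]
  rw [sum_comm]
  exact sum_congr rfl fun r _ => (Fintype.sum_ite_mem _ _).symm.trans (by simp [ite_and])

end DiffCount

section ZModSums

variable {M : Type*} [AddCommMonoid M] {q : ℕ} [NeZero q]

theorem sum_range_natCast_eq_sum (f : ZMod q → M) : ∑ j ∈ range q, f j = ∑ s, f s := by
  refine sum_nbij' (fun j => (j : ZMod q)) ZMod.val ?_ ?_ ?_ ?_ ?_
  · intro _ _; exact mem_coe.2 (mem_univ _)
  · intro s _; exact mem_range.2 (ZMod.val_lt s)
  · intro j hj; exact ZMod.val_cast_of_lt (mem_range.1 hj)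
  · intro s _; exact ZMod.natCast_zmod_val s
  · intro _ _; rfl

theorem sum_range_mul_natCast (m : ℕ) (f : ZMod q → M) :
    ∑ j ∈ range (m * q), f j = m • ∑ s, f s := by
  induction m with
  | zero => simp
  | succ m ih =>
    rw [add_mul, one_mul, sum_range_add, ih, succ_nsmul, ← sum_range_natCast_eq_sum]
    congr 1
    refine sum_congr rfl fun j _ => ?_
    simp

end ZModSums

theorem card_image_natCast_of_subset_range {q : ℕ} {T : Finset ℕ} (hT : T ⊆ range q) :
    #(T.image (Nat.cast : ℕ → ZMod q)) = #T :=
  card_image_of_injOn fun a ha b hb hab => by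
    simpa [ZMod.val_cast_of_lt (mem_range.1 (hT ha)), ZMod.val_cast_of_lt (mem_range.1 (hT hb))]
      using congrArg ZMod.val hab

section Block

variable {M : Type*} [Monoid M] [DecidableEq M] {x : M} {n q : ℕ}

/-- The paper's block `S_{r,0} = {x ^ (j * q + i) | j < n / q, i ∈ T + r (mod q)}`. -/
def block (x : M) (n q : ℕ) (T : Finset ℕ) (r : ℕ) : Finset M :=
  (range (n / q) ×ˢ T).image fun p => x ^ (p.1 * q + (p.2 + r) % q)

theorem pow_mem_block_iff (hx : orderOf x = n) (hn : 0 < n) (hq : q ∣ n) (T : Finset ℕ)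
    (r e : ℕ) : x ^ e ∈ block x n q T r ↔ (e - r : ZMod q) ∈ T.image Nat.cast := by
  have hfin : IsOfFinOrder x := orderOf_pos_iff.1 (hx ▸ hn)
  simp only [block, mem_image, mem_product, mem_range, Prod.exists]
  constructor
  · rintro ⟨j, i, ⟨-, hi⟩, hpow⟩
    have hmod : j * q + (i + r) % q ≡ e [MOD q] :=
      Nat.ModEq.of_dvd (hx ▸ hq) (hfin.pow_eq_pow_iff_modEq.1 hpow)
    refine ⟨i, hi, ?_⟩
    rw [← (ZMod.natCast_eq_natCast_iff _ _ _).2 hmod]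
    push_cast [ZMod.natCast_mod, ZMod.natCast_self]
    ring
  · rintro ⟨i, hi, hie⟩
    have hres : (i + r) % q = e % q := by
      rw [← ZMod.natCast_eq_natCast_iff']
      push_cast
      rw [hie]
      ring
    refine ⟨e % n / q, i, ⟨Nat.div_lt_div_of_lt_of_dvd hq (Nat.mod_lt _ hn), hi⟩, ?_⟩
    rw [hres, ← Nat.mod_mod_of_dvd e hq, Nat.div_add_mod', ← hx, pow_mod_orderOf]

theorem card_filter_pow_mem_block (hx : orderOf x = n) (hn : 0 < n) (hq : q ∣ n)
    (T : Finset ℕ) (j k : ℕ) :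
    #{r ∈ range q | x ^ j ∈ block x n q T r ∧ x ^ (j + k) ∈ block x n q T r} =
      diffCount (T.image Nat.cast : Finset (ZMod q)) k := by
  have : NeZero q := ⟨(Nat.pos_of_dvd_of_pos hq hn).ne'⟩
  set A : Finset (ZMod q) := T.image Nat.cast
  simp_rw [pow_mem_block_iff hx hn hq, card_filter, Nat.cast_add]
  rw [sum_range_natCast_eq_sum fun s : ZMod q => if (j - s) ∈ A ∧ (j + k - s) ∈ A then 1 else 0,
    ← card_filter, card_sub_mem_and_add_sub_mem]

end Block

section FiniteField

variable {F : Type*} [Field F] [Fintype F] {x : F}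

theorem ne_zero_of_forall_pow_eq (hF : 2 < Fintype.card F)
    (hgen : ∀ y : F, y ≠ 0 → ∃ k : ℕ, x ^ k = y) : x ≠ 0 := by
  classical
  obtain ⟨y, -, hy⟩ := exists_mem_notMem_of_card_lt_card (s := ({0, 1} : Finset F))
    (t := univ) ((card_insert_le _ _).trans_lt (by simpa using hF))
  simp only [mem_insert, mem_singleton, not_or] at hy
  rintro rfl
  obtain ⟨_ | k, hk⟩ := hgen y hy.1
  · exact hy.2 (by simpa using hk.symm)
  · exact hy.1 (by simpa using hk.symm)

theorem orderOf_pos_of_ne_zero (hx0 : x ≠ 0) : 0 < orderOf x := by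
  lift x to Fˣ using hx0.isUnit
  rw [orderOf_units]
  exact orderOf_pos _

theorem orderOf_eq_card_sub_one (hx0 : x ≠ 0) (hgen : ∀ y : F, y ≠ 0 → ∃ k : ℕ, x ^ k = y) :
    orderOf x = Fintype.card F - 1 := by
  classical
  lift x to Fˣ using hx0.isUnit
  rw [orderOf_units, orderOf_eq_card_of_forall_mem_zpowers, Nat.card_eq_fintype_card,
    Fintype.card_units]
  intro y
  obtain ⟨k, hk⟩ := hgen y y.ne_zero
  exact ⟨k, Units.ext (by simpa using hk)⟩

theorem sum_eq_add_sum_range_pow [DecidableEq F] {M : Type*} [AddCommMonoid M] (hx0 : x ≠ 0)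
    (hgen : ∀ y : F, y ≠ 0 → ∃ k : ℕ, x ^ k = y) (f : F → M) :
    ∑ y, f y = f 0 + ∑ k ∈ range (orderOf x), f (x ^ k) := by
  have hnonzero : univ.erase 0 = (range (orderOf x)).image (x ^ ·) := by
    ext y
    simp only [mem_erase, mem_univ, and_true, mem_image, mem_range]
    constructor
    · intro hy
      obtain ⟨k, rfl⟩ := hgen y hy
      exact ⟨k % orderOf x, Nat.mod_lt _ (orderOf_pos_of_ne_zero hx0), pow_mod_orderOf _ _⟩
    · rintro ⟨k, -, rfl⟩
      exact pow_ne_zero k hx0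
  rw [← add_sum_erase _ _ (mem_univ 0), hnonzero,
    sum_image (by rw [coe_range]; exact pow_injOn_Iio_orderOf)]

end FiniteField

section BlockFiniteField

variable {F : Type*} [Field F] [DecidableEq F] {x : F} {n q : ℕ} {T : Finset ℕ}

theorem zero_notMem_block (hx0 : x ≠ 0) (r : ℕ) : (0 : F) ∉ block x n q T r := by
  simp only [block, mem_image, not_exists, not_and]
  exact fun _ _ => pow_ne_zero _ hx0

theorem card_filter_div_pow_sub_one_mem_block (hgen : ∀ y : F, y ≠ 0 → ∃ k : ℕ, x ^ k = y)
    (hx : orderOf x = n) (hq : q ∣ n) {d : F} (hd : d ≠ 0) {k : ℕ} (hk : k ∈ Ico 1 n) :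
    #{r ∈ range q |
        d / (x ^ k - 1) ∈ block x n q T r ∧ d / (x ^ k - 1) + d ∈ block x n q T r} =
      diffCount (T.image Nat.cast : Finset (ZMod q)) k := by
  obtain ⟨hk1, hkn⟩ := mem_Ico.1 hk
  have hxk : x ^ k - 1 ≠ 0 := sub_ne_zero.2 (pow_ne_one_of_lt_orderOf (by omega) (hx ▸ hkn))
  obtain ⟨j, hj⟩ := hgen _ (div_ne_zero hd hxk)
  have hjk : x ^ (j + k) = d / (x ^ k - 1) + d := by
    rw [pow_add, hj]
    field_simp
    ring
  rw [← hjk, ← hj]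
  exact card_filter_pow_mem_block hx (by omega) hq T j k

theorem sum_card_filter_mem_block_add_card [Fintype F] (hx0 : x ≠ 0)
    (hgen : ∀ y : F, y ≠ 0 → ∃ k : ℕ, x ^ k = y) (hx : orderOf x = n) (hq : q ∣ n) {d : F}
    (hd : d ≠ 0) :
    ∑ v : F, #{r ∈ range q | v ∈ block x n q T r ∧ v + d ∈ block x n q T r} +
        #(T.image (Nat.cast : ℕ → ZMod q)) =
      n / q * #(T.image (Nat.cast : ℕ → ZMod q)) ^ 2 := by
  set A : Finset (ZMod q) := T.image Nat.cast
  set H : F → ℕ := fun v => #{r ∈ range q | v ∈ block x n q T r ∧ v + d ∈ block x n q T r}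
  have hn : 0 < n := hx ▸ orderOf_pos_of_ne_zero hx0
  have : NeZero q := ⟨(Nat.pos_of_dvd_of_pos hq hn).ne'⟩
  have hH0 : H 0 = 0 := card_eq_zero.2 <| filter_eq_empty_iff.2 fun r _ h =>
    zero_notMem_block hx0 r h.1
  have hHneg : H (-d) = 0 := card_eq_zero.2 <| filter_eq_empty_iff.2 fun r _ h =>
    zero_notMem_block hx0 r (by simpa using h.2)
  -- `w = (v + d) / v` means `v = d / (w - 1)`; with `d / 0 = 0` this is a permutation of `F`
  -- sending `w = 0, 1` to `v = -d, 0`.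
  have hreindex : ∑ v, H v = ∑ w, H (d / (w - 1)) :=
    (Fintype.sum_equiv (((Equiv.subRight 1).trans (Equiv.inv F)).trans (Equiv.mulLeft₀ d hd))
      _ _ fun w => by simp [div_eq_mul_inv]).symm
  have hsplit : ∀ g : ℕ → ℕ, ∑ k ∈ range n, g k = g 0 + ∑ k ∈ Ico 1 n, g k := fun g => by
    rw [range_eq_Ico]
    exact sum_eq_sum_Ico_succ_bot hn g
  have hperiodic : ∑ k ∈ range n, diffCount A k = n / q * ∑ s, diffCount A s := by
    conv_lhs => rw [← Nat.div_mul_cancel hq]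
    exact sum_range_mul_natCast _ _
  calc ∑ v, H v + #A = ∑ k ∈ Ico 1 n, H (d / (x ^ k - 1)) + #A := by
        rw [hreindex, sum_eq_add_sum_range_pow hx0 hgen, hx, hsplit]
        simp [div_neg, hHneg, hH0]
    _ = ∑ k ∈ range n, diffCount A k := by
        rw [hsplit, add_comm, sum_congr rfl fun k hk =>
          card_filter_div_pow_sub_one_mem_block hgen hx hq hd hk, Nat.cast_zero, diffCount]
        simp_rw [add_zero, filter_true_of_mem fun _ h => h]
        rfl
    _ = n / q * #A ^ 2 := by rw [hperiodic, sum_diffCount]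

end BlockFiniteField

theorem stmt_0_general (N q : ℕ) (F : Type) [Field F] [Fintype F] [DecidableEq F]
    (hcard : Fintype.card F = N - 1)
    (x : F) (hx : ∀ y : F, y ≠ 0 → ∃ k : ℕ, x ^ k = y)
    (hq : q ∣ N - 2) (hqeven : Even q)
    (T : Finset ℕ) (hT : T ⊆ Finset.range q) (hTcard : T.card = q / 2)
    (S : ℕ → F → Finset F)
    (hS : ∀ r a, S r a =
      (Finset.range ((N - 2) / q) ×ˢ T).image
        (fun p => x ^ (p.1 * q + (p.2 + r) % q) + a)) :
    ∀ d : F, d ≠ 0 →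
      (∑ r ∈ Finset.range q,
        ((S r 0 ×ˢ S r 0).filter (fun p => p.1 ≠ p.2 ∧ p.1 - p.2 = d)).card)
        = (q / 2) * ((N - 2) / 2 - 1) := by
  intro d hd
  obtain ⟨K, hK⟩ := hqeven
  obtain ⟨m, hm⟩ := hq
  have hn : N - 2 = 2 * (K * m) := by rw [hm, hK]; ring
  have hF := Fintype.one_lt_card (α := F)
  have hx0 : x ≠ 0 := ne_zero_of_forall_pow_eq (by omega) hx
  have hord : orderOf x = N - 2 := by rw [orderOf_eq_card_sub_one hx0 hx, hcard]; omega
  have hblocks : ∀ r, S r 0 = block x (N - 2) q T r := fun r => by simp [hS, block]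
  have hcount := sum_card_filter_mem_block_add_card (T := T) hx0 hx hord ⟨m, hm⟩ hd
  have hq2 : q / 2 = K := by omega
  have hm' : (N - 2) / q = m :=
    hm ▸ Nat.mul_div_cancel_left _ (Nat.pos_of_dvd_of_pos ⟨m, hm⟩ (by omega))
  rw [card_image_natCast_of_subset_range hT, hTcard, hq2, hm'] at hcount
  simp_rw [hblocks, card_filter_pair_sub_eq_diffCount hd, sum_diffCount_eq_sum_card_filter]
  rw [hq2, show (N - 2) / 2 = K * m by omega, Nat.mul_sub_one]
  have : m * K ^ 2 = K * (K * m) := by ring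
  omega

/-- Difference family property of the blocks `S_{r,0}` (Theorem 2.1, first part):
if `N-1` is an odd prime power, `q` an even divisor of `N-2`, `x` a primitive
element of `GF(N-1)` and `T ⊆ ℤ_q` of size `q/2`, then the multiset of differences
from the blocks `S_{r,0}`, `0 ≤ r ≤ q-1`, covers each nonzero element of `GF(N-1)`
exactly `(q/2)((N-2)/2 - 1)` times. -/
theorem stmt_0 (N q : ℕ) (F : Type) [Field F] [Fintype F] [DecidableEq F]
    (hNeven : Even N) (hcard : Fintype.card F = N - 1) (hNodd : Odd (N - 1))
    (x : F) (hx : ∀ y : F, y ≠ 0 → ∃ k : ℕ, x ^ k = y)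
    (hq : q ∣ N - 2) (hqeven : Even q)
    (T : Finset ℕ) (hT : T ⊆ Finset.range q) (hTcard : T.card = q / 2)
    (S : ℕ → F → Finset F)
    (hS : ∀ r a, S r a =
      (Finset.range ((N - 2) / q) ×ˢ T).image
        (fun p => x ^ (p.1 * q + (p.2 + r) % q) + a)) :
    ∀ d : F, d ≠ 0 →
      (∑ r ∈ Finset.range q,
        ((S r 0 ×ˢ S r 0).filter (fun p => p.1 ≠ p.2 ∧ p.1 - p.2 = d)).card)
        = (q / 2) * ((N - 2) / 2 - 1) :=
  stmt_0_general N q F hcard x hx hq hqeven T hT hTcard S hS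
end

section
/- If $N-1$ is an odd prime power, $q$ is an even divisor of $N-2$, $x$ is a primitive element of $\mathrm{GF}(N-1)$, $T \subseteq \mathbb{Z}_q$ has size $q/2$, then the $q(N-1)$ sets $S_{r,a} = \{x^{jq+i} + a : 0 \le j \le (N-2)/q - 1,\ i \in T + r\}$ for $r \in \{0, \dots, q-1\}$ and $a \in \mathrm{GF}(N-1)$ form the blocks of a balanced incomplete block design with $N-1$ treatments, $q(N-1)$ blocks of size $N/2 - 1$, i.e., every pair of distinct treatments appears together in the same number of blocks. -/
/-- Theorem 2.1 (first part): the `q(N-1)` sets `S_{r,a}` form the blocks of a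
BIBD(N-1, q(N-1), N/2-1): each block has size `N/2 - 1` and every pair of
distinct treatments appears together in the same number of blocks. -/
theorem stmt_1 (N q : ℕ) (F : Type) [Field F] [Fintype F] [DecidableEq F]
    (hNeven : Even N) (hcard : Fintype.card F = N - 1) (hNodd : Odd (N - 1))
    (x : F) (hx : ∀ y : F, y ≠ 0 → ∃ k : ℕ, x ^ k = y)
    (hq : q ∣ N - 2) (hqeven : Even q)
    (T : Finset ℕ) (hT : T ⊆ Finset.range q) (hTcard : T.card = q / 2)
    (S : ℕ → F → Finset F)
    (hS : ∀ r a, S r a =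
      (Finset.range ((N - 2) / q) ×ˢ T).image
        (fun p => x ^ (p.1 * q + (p.2 + r) % q) + a)) :
    (∀ r < q, ∀ a : F, (S r a).card = N / 2 - 1) ∧
    ∃ lam : ℕ, ∀ u v : F, u ≠ v →
      ((Finset.range q ×ˢ (Finset.univ : Finset F)).filter
        (fun p => u ∈ S p.1 p.2 ∧ v ∈ S p.1 p.2)).card = lam := by
  classical
  -- basic numerical facts
  have hF2 : 2 ≤ Fintype.card F := Fintype.one_lt_card
  have hN4 : 4 ≤ N := by
    rcases hNodd with ⟨k, hk⟩
    omega
  have hq0 : 0 < q := by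
    rcases Nat.eq_zero_or_pos q with h | h
    · subst h
      have := Nat.eq_zero_of_zero_dvd hq
      omega
    · exact h
  set m := (N - 2) / q with hm
  have hmq : m * q = N - 2 := Nat.div_mul_cancel hq
  -- x is nonzero
  have hx0 : x ≠ 0 := by
    intro h
    obtain ⟨y, hy0, hy1⟩ : ∃ y : F, y ≠ 0 ∧ y ≠ 1 := by
      by_contra hc
      push_neg at hc
      have hsub : (Finset.univ : Finset F) ⊆ {0, 1} := by
        intro y _
        rcases eq_or_ne y 0 with h' | h'
        · simp [h']
        · simp [hc y h']
      have h1 := Finset.card_le_card hsub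
      have h2 : ({0, 1} : Finset F).card ≤ 2 := by
        apply le_trans (Finset.card_insert_le _ _)
        simp
      rw [Finset.card_univ] at h1
      omega
    obtain ⟨k, hk⟩ := hx y hy0
    rcases Nat.eq_zero_or_pos k with hk0 | hk0
    · rw [hk0, pow_zero] at hk
      exact hy1 hk.symm
    · rw [h, zero_pow (by omega)] at hk
      exact hy0 hk.symm
  -- the unit corresponding to x
  set xu : Fˣ := Units.mk0 x hx0 with hxu
  have hxupow : ∀ k : ℕ, ((xu ^ k : Fˣ) : F) = x ^ k := fun k => by
    rw [Units.val_pow_eq_pow_val]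
    rfl
  have horder : orderOf xu = N - 2 := by
    have h1 : orderOf xu = Nat.card Fˣ := by
      apply orderOf_eq_card_of_forall_mem_zpowers
      intro y
      obtain ⟨k, hk⟩ := hx (y : F) (Units.ne_zero y)
      refine ⟨(k : ℤ), ?_⟩
      have h2 : (xu ^ k : Fˣ) = y := Units.ext (by rw [hxupow, hk])
      show xu ^ (k : ℤ) = y
      rw [zpow_natCast]
      exact h2
    rw [h1, Nat.card_eq_fintype_card, Fintype.card_units, hcard]
    omega
  have hmodEq : ∀ e f : ℕ, x ^ e = x ^ f → e ≡ f [MOD N - 2] := by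
    intro e f h
    have h2 : xu ^ e = xu ^ f := Units.ext (by rw [hxupow, hxupow]; exact h)
    rw [← horder]
    exact pow_eq_pow_iff_modEq.mp h2
  have hpow_inj : ∀ e f, e < N - 2 → f < N - 2 → x ^ e = x ^ f → e = f := by
    intro e f he hf h
    have h2 := hmodEq e f h
    unfold Nat.ModEq at h2
    rwa [Nat.mod_eq_of_lt he, Nat.mod_eq_of_lt hf] at h2
  have hpow_mod : ∀ e : ℕ, x ^ (e % (N - 2)) = x ^ e := by
    intro e
    have h2 : xu ^ (e % orderOf xu) = xu ^ e := pow_mod_orderOf xu e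
    rw [horder] at h2
    have := congrArg (Units.val) h2
    rwa [hxupow, hxupow] at this
  constructor
  · -- first part: block sizes
    intro r _ a
    rw [hS, Finset.card_image_of_injOn, Finset.card_product, Finset.card_range, hTcard]
    · obtain ⟨q', hq'⟩ := hqeven
      have hq2 : q / 2 = q' := by omega
      have h2 : N - 2 = 2 * (m * q') := by rw [← hmq, hq']; ring
      rw [hq2]
      generalize m * q' = K at h2 ⊢
      omega
    · rintro ⟨j1, i1⟩ h1 ⟨j2, i2⟩ h2 heq
      simp only [Finset.coe_product, Set.mem_prod, Finset.mem_coe, Finset.mem_range] at h1 h2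
      have hi1q : i1 < q := Finset.mem_range.mp (hT h1.2)
      have hi2q : i2 < q := Finset.mem_range.mp (hT h2.2)
      have hx12 : x ^ (j1 * q + (i1 + r) % q) = x ^ (j2 * q + (i2 + r) % q) := by
        have := heq
        simp only at this
        exact add_right_cancel this
      have hb : ∀ j i, j < m → j * q + (i + r) % q < N - 2 := by
        intro j i hj
        calc j * q + (i + r) % q < j * q + q :=
              Nat.add_lt_add_left (Nat.mod_lt _ hq0) _
          _ = (j + 1) * q := by ring
          _ ≤ m * q := Nat.mul_le_mul_right q hj
          _ = N - 2 := hmq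
      have hee : j1 * q + (i1 + r) % q = j2 * q + (i2 + r) % q :=
        hpow_inj _ _ (hb j1 i1 h1.1) (hb j2 i2 h2.1) hx12
      have hmodq : (i1 + r) % q = (i2 + r) % q := by
        have h5 : ∀ jj ii : ℕ, (jj * q + (ii + r) % q) % q = (ii + r) % q := by
          intro jj ii
          simp [Nat.add_mod, Nat.mul_mod]
        have h6 := congrArg (· % q) hee
        rwa [h5 j1 i1, h5 j2 i2] at h6
      have hi : i1 = i2 := by
        have h3 : i1 ≡ i2 [MOD q] := Nat.ModEq.add_right_cancel' r hmodq
        unfold Nat.ModEq at h3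
        rwa [Nat.mod_eq_of_lt hi1q, Nat.mod_eq_of_lt hi2q] at h3
      have hj : j1 = j2 := by
        have h4 : j1 * q = j2 * q := by omega
        exact Nat.eq_of_mul_eq_mul_right hq0 h4
      simp [hi, hj]
  · -- second part: λ
    obtain ⟨idx, hidx⟩ : ∃ g : F → ℕ, ∀ y : F, y ≠ 0 → x ^ g y = y :=
      ⟨fun y => if h : y = 0 then 0 else (hx y h).choose,
       fun y hy => by
        show x ^ (if h : y = 0 then 0 else (hx y h).choose) = y
        rw [dif_neg hy]
        exact (hx y hy).choose_spec⟩
    set cond : ℕ → ℕ → Prop := fun r e => ∃ i ∈ T, e ≡ i + r [MOD q] with hcond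
    have hcondpow : ∀ (r e f : ℕ), e ≡ f [MOD q] → (cond r e ↔ cond r f) := by
      intro r e f h
      constructor <;> rintro ⟨i, hi, hmm⟩
      · exact ⟨i, hi, h.symm.trans hmm⟩
      · exact ⟨i, hi, h.trans hmm⟩
    have hcondr : ∀ (r r' e : ℕ), r ≡ r' [MOD q] → (cond r e ↔ cond r' e) := by
      intro r r' e h
      constructor <;> rintro ⟨i, hi, hmm⟩
      · exact ⟨i, hi, hmm.trans (Nat.ModEq.add_left i h)⟩
      · exact ⟨i, hi, hmm.trans (Nat.ModEq.add_left i h.symm)⟩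
    have hmodq : ∀ e f : ℕ, x ^ e = x ^ f → e ≡ f [MOD q] :=
      fun e f h => (hmodEq e f h).of_dvd hq
    -- membership criterion
    have hmem : ∀ (r : ℕ) (a u : F), u ∈ S r a ↔ (u ≠ a ∧ cond r (idx (u - a))) := by
      intro r a u
      rw [hS, Finset.mem_image]
      constructor
      · rintro ⟨⟨j, i⟩, hp, hpe⟩
        simp only [Finset.mem_product, Finset.mem_range] at hp
        have hxe : x ^ (j * q + (i + r) % q) = u - a := by rw [← hpe]; ring
        have hne : u ≠ a := by
          intro h
          rw [h, sub_self] at hxe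
          exact pow_ne_zero _ hx0 hxe
        refine ⟨hne, ?_⟩
        have hc1 : cond r (j * q + (i + r) % q) := by
          refine ⟨i, hp.2, ?_⟩
          show (j * q + (i + r) % q) % q = (i + r) % q
          simp [Nat.add_mod, Nat.mul_mod]
        have hx2 : x ^ (j * q + (i + r) % q) = x ^ (idx (u - a)) := by
          rw [hidx _ (sub_ne_zero.mpr hne), hxe]
        exact (hcondpow r _ _ (hmodq _ _ hx2)).mp hc1
      · rintro ⟨hne, i, hi, hmod⟩
        have hy : x ^ (idx (u - a)) = u - a := hidx _ (sub_ne_zero.mpr hne)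
        set e := idx (u - a) % (N - 2) with he
        have hxe : x ^ e = u - a := by rw [he, hpow_mod]; exact hy
        have heN : e < N - 2 := Nat.mod_lt _ (by omega)
        have heq : e % q = (i + r) % q := by
          have h1 : e % q = idx (u - a) % q := by
            rw [he, Nat.mod_mod_of_dvd _ hq]
          rw [h1]
          exact hmod
        refine ⟨(e / q, i), ?_, ?_⟩
        · simp only [Finset.mem_product, Finset.mem_range]
          refine ⟨?_, hi⟩
          rw [hm]
          exact Nat.div_lt_div_of_lt_of_dvd hq (by omega)
        · simp only
          have h2 : e / q * q + (i + r) % q = e := by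
            rw [← heq, mul_comm]
            exact Nat.div_add_mod e q
          rw [h2, hxe]
          ring
    -- the pair count function
    set pc : ℕ → ℕ → ℕ :=
      fun e f => ((Finset.range q).filter (fun r => cond r e ∧ cond r f)).card with hpc
    have hpccongr : ∀ e e' f f' : ℕ, e ≡ e' [MOD q] → f ≡ f' [MOD q] → pc e f = pc e' f' := by
      intro e e' f f' h1 h2
      apply congrArg Finset.card
      apply Finset.filter_congr
      intro r _
      exact and_congr (hcondpow r e e' h1) (hcondpow r f f' h2)
    -- shift invariance
    have hkey : ∀ r e c : ℕ, cond ((r + c) % q) (e + c) ↔ cond r e := by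
      intro r e c
      constructor <;> rintro ⟨i, hi, hmm⟩
      · refine ⟨i, hi, ?_⟩
        have h2 : i + (r + c) % q ≡ (i + r) + c [MOD q] := by
          calc i + (r + c) % q ≡ i + (r + c) [MOD q] :=
                Nat.ModEq.add_left i (Nat.mod_modEq _ _)
            _ = (i + r) + c := by ring
        have h3 : e + c ≡ (i + r) + c [MOD q] := hmm.trans h2
        exact Nat.ModEq.add_right_cancel' c h3
      · refine ⟨i, hi, ?_⟩
        have h2 : (i + r) + c ≡ i + (r + c) % q [MOD q] := by
          calc (i + r) + c = i + (r + c) := by ring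
            _ ≡ i + (r + c) % q [MOD q] := Nat.ModEq.add_left i (Nat.mod_modEq _ _).symm
        exact (hmm.add_right c).trans h2
    have hshift : ∀ e f c : ℕ, pc (e + c) (f + c) = pc e f := by
      intro e f c
      have hcq : c * (q - 1) + c = c * q := by
        obtain ⟨qq, rfl⟩ : ∃ qq, q = qq + 1 := ⟨q - 1, by omega⟩
        rw [Nat.add_sub_cancel]
        ring
      symm
      apply Finset.card_bij' (fun r _ => (r + c) % q) (fun r _ => (r + c * (q - 1)) % q)
      · intro r hr
        simp only [Finset.mem_filter, Finset.mem_range] at hr ⊢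
        exact ⟨Nat.mod_lt _ hq0, (hkey r e c).mpr hr.2.1, (hkey r f c).mpr hr.2.2⟩
      · intro r' hr'
        simp only [Finset.mem_filter, Finset.mem_range] at hr' ⊢
        refine ⟨Nat.mod_lt _ hq0, ?_, ?_⟩
        · have h1 : (((r' + c * (q - 1)) % q) + c) % q ≡ r' [MOD q] := by
            calc (((r' + c * (q - 1)) % q) + c) % q
                ≡ ((r' + c * (q - 1)) % q) + c [MOD q] := Nat.mod_modEq _ _
              _ ≡ (r' + c * (q - 1)) + c [MOD q] :=
                  Nat.ModEq.add_right c (Nat.mod_modEq _ _)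
              _ = r' + (c * (q - 1) + c) := by ring
              _ = r' + c * q := by rw [hcq]
              _ ≡ r' [MOD q] := by
                  show (r' + c * q) % q = r' % q
                  simp [Nat.add_mul_mod_self_right]
          have h2 := (hcondr _ r' (e + c) h1).mpr hr'.2.1
          exact (hkey _ e c).mp h2
        · have h1 : (((r' + c * (q - 1)) % q) + c) % q ≡ r' [MOD q] := by
            calc (((r' + c * (q - 1)) % q) + c) % q
                ≡ ((r' + c * (q - 1)) % q) + c [MOD q] := Nat.mod_modEq _ _
              _ ≡ (r' + c * (q - 1)) + c [MOD q] :=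
                  Nat.ModEq.add_right c (Nat.mod_modEq _ _)
              _ = r' + (c * (q - 1) + c) := by ring
              _ = r' + c * q := by rw [hcq]
              _ ≡ r' [MOD q] := by
                  show (r' + c * q) % q = r' % q
                  simp [Nat.add_mul_mod_self_right]
          have h2 := (hcondr _ r' (f + c) h1).mpr hr'.2.2
          exact (hkey _ f c).mp h2
      · intro r hr
        simp only [Finset.mem_filter, Finset.mem_range] at hr
        calc ((r + c) % q + c * (q - 1)) % q = (r + c + c * (q - 1)) % q := Nat.mod_add_mod _ _ _
          _ = (r + (c * (q - 1) + c)) % q := by ring_nf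
          _ = (r + c * q) % q := by rw [hcq]
          _ = r % q := Nat.add_mul_mod_self_right _ _ _
          _ = r := Nat.mod_eq_of_lt hr.1
      · intro r' hr'
        simp only [Finset.mem_filter, Finset.mem_range] at hr'
        calc ((r' + c * (q - 1)) % q + c) % q = (r' + c * (q - 1) + c) % q := Nat.mod_add_mod _ _ _
          _ = (r' + (c * (q - 1) + c)) % q := by ring_nf
          _ = (r' + c * q) % q := by rw [hcq]
          _ = r' % q := Nat.add_mul_mod_self_right _ _ _
          _ = r' := Nat.mod_eq_of_lt hr'.1
    -- now the main count
    refine ⟨∑ w ∈ Finset.univ.filter (fun w : F => w ≠ 0 ∧ w ≠ 1), pc (idx w) 0, ?_⟩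
    intro u v huv
    have hA : ((Finset.range q ×ˢ (Finset.univ : Finset F)).filter
        (fun p => u ∈ S p.1 p.2 ∧ v ∈ S p.1 p.2))
        = ((Finset.range q ×ˢ (Finset.univ : Finset F)).filter
            (fun p : ℕ × F =>
              (u ≠ p.2 ∧ cond p.1 (idx (u - p.2))) ∧ (v ≠ p.2 ∧ cond p.1 (idx (v - p.2))))) := by
      apply Finset.filter_congr
      intro p _
      exact and_congr (hmem p.1 p.2 u) (hmem p.1 p.2 v)
    rw [hA, Finset.card_filter, Finset.sum_product, Finset.sum_comm]
    have hinner : ∀ a : F,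
        (∑ r ∈ Finset.range q, if (u ≠ a ∧ cond r (idx (u - a))) ∧
            (v ≠ a ∧ cond r (idx (v - a))) then 1 else 0)
        = if a ≠ u ∧ a ≠ v then pc (idx (u - a)) (idx (v - a)) else 0 := by
      intro a
      by_cases h : a ≠ u ∧ a ≠ v
      · rw [if_pos h, hpc]
        simp only
        rw [Finset.card_filter]
        apply Finset.sum_congr rfl
        intro r _
        refine if_congr ?_ rfl rfl
        constructor
        · rintro ⟨⟨-, h1⟩, ⟨-, h2⟩⟩; exact ⟨h1, h2⟩
        · rintro ⟨h1, h2⟩; exact ⟨⟨h.1.symm, h1⟩, ⟨h.2.symm, h2⟩⟩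
      · rw [if_neg h]
        apply Finset.sum_eq_zero
        intro r _
        rw [if_neg]
        rintro ⟨⟨h1, -⟩, ⟨h2, -⟩⟩
        exact h ⟨fun hau => h1 hau.symm, fun hav => h2 hav.symm⟩
    rw [Finset.sum_congr rfl (fun a _ => hinner a), ← Finset.sum_filter]
    have hCD : ∀ a ∈ Finset.univ.filter (fun a : F => a ≠ u ∧ a ≠ v),
        pc (idx (u - a)) (idx (v - a)) = pc (idx ((u - a) * (v - a)⁻¹)) 0 := by
      intro a ha
      simp only [Finset.mem_filter] at ha
      obtain ⟨-, hau, hav⟩ := ha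
      have hs : u - a ≠ 0 := sub_ne_zero.mpr (Ne.symm hau)
      have ht : v - a ≠ 0 := sub_ne_zero.mpr (Ne.symm hav)
      have hw : (u - a) * (v - a)⁻¹ ≠ 0 := mul_ne_zero hs (inv_ne_zero ht)
      have hkey2 : x ^ (idx (u - a)) = x ^ (idx ((u - a) * (v - a)⁻¹) + idx (v - a)) := by
        rw [pow_add, hidx _ hs, hidx _ hw, hidx _ ht]
        field_simp
      have h1 : idx (u - a) ≡ idx ((u - a) * (v - a)⁻¹) + idx (v - a) [MOD q] :=
        hmodq _ _ hkey2
      calc pc (idx (u - a)) (idx (v - a))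
          = pc (idx ((u - a) * (v - a)⁻¹) + idx (v - a)) (0 + idx (v - a)) := by
            rw [zero_add]
            exact hpccongr _ _ _ _ h1 Nat.ModEq.rfl
        _ = pc (idx ((u - a) * (v - a)⁻¹)) 0 := hshift _ _ _
    rw [Finset.sum_congr rfl hCD]
    have hne_uv : u - v ≠ 0 := sub_ne_zero.mpr huv
    apply Finset.sum_nbij' (i := fun a => (u - a) * (v - a)⁻¹)
      (j := fun w => (u - v * w) * (1 - w)⁻¹)
    · intro a ha
      simp only [Finset.mem_filter, Finset.mem_univ, true_and] at ha ⊢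
      have hs : u - a ≠ 0 := sub_ne_zero.mpr (Ne.symm ha.1)
      have ht : v - a ≠ 0 := sub_ne_zero.mpr (Ne.symm ha.2)
      refine ⟨mul_ne_zero hs (inv_ne_zero ht), ?_⟩
      intro h1
      apply huv
      rw [mul_inv_eq_iff_eq_mul₀ ht] at h1
      linear_combination h1
    · intro w hw
      simp only [Finset.mem_filter, Finset.mem_univ, true_and] at hw ⊢
      have h1w : (1 : F) - w ≠ 0 := sub_ne_zero.mpr (Ne.symm hw.2)
      constructor
      · intro h
        rw [mul_inv_eq_iff_eq_mul₀ h1w] at h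
        have h2 : (u - v) * w = 0 := by linear_combination h
        rcases mul_eq_zero.mp h2 with h3 | h3
        · exact huv (sub_eq_zero.mp h3)
        · exact hw.1 h3
      · intro h
        rw [mul_inv_eq_iff_eq_mul₀ h1w] at h
        have h2 : u - v = 0 := by linear_combination h
        exact huv (sub_eq_zero.mp h2)
    · intro a ha
      simp only [Finset.mem_filter, Finset.mem_univ, true_and] at ha
      have hs : u - a ≠ 0 := sub_ne_zero.mpr (Ne.symm ha.1)
      have ht : v - a ≠ 0 := sub_ne_zero.mpr (Ne.symm ha.2)
      have hvu : v - u ≠ 0 := sub_ne_zero.mpr (Ne.symm huv)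
      have e1 : (1 : F) - (u - a) * (v - a)⁻¹ = (v - u) * (v - a)⁻¹ := by
        field_simp
        try ring
      have e2 : u - v * ((u - a) * (v - a)⁻¹) = a * ((v - u) * (v - a)⁻¹) := by
        field_simp
        try ring
      have hz : (v - u) * (v - a)⁻¹ ≠ 0 := mul_ne_zero hvu (inv_ne_zero ht)
      show (u - v * ((u - a) * (v - a)⁻¹)) * (1 - (u - a) * (v - a)⁻¹)⁻¹ = a
      rw [e2, e1]
      exact mul_inv_cancel_right₀ hz a
    · intro w hw
      simp only [Finset.mem_filter, Finset.mem_univ, true_and] at hw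
      have h1w : (1 : F) - w ≠ 0 := sub_ne_zero.mpr (Ne.symm hw.2)
      have hvu : v - u ≠ 0 := sub_ne_zero.mpr (Ne.symm huv)
      have e3 : u - (u - v * w) * (1 - w)⁻¹ = w * ((v - u) * (1 - w)⁻¹) := by
        field_simp
        try ring
      have e4 : v - (u - v * w) * (1 - w)⁻¹ = (v - u) * (1 - w)⁻¹ := by
        field_simp
        try ring
      have hz : (v - u) * (1 - w)⁻¹ ≠ 0 := mul_ne_zero hvu (inv_ne_zero h1w)
      show (u - (u - v * w) * (1 - w)⁻¹) * (v - (u - v * w) * (1 - w)⁻¹)⁻¹ = w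
      rw [e3, e4]
      exact mul_inv_cancel_right₀ hz w
    · intro a ha
      rfl
end

section
/- Suppose $N-1$ is an odd prime power, $q$ is an even divisor of $N-2$ with $(N-2)/q$ odd, $x$ is a primitive element of $\mathrm{GF}(N-1)$, $T \subseteq \mathbb{Z}_q$ has size $q/2$, and $U \subseteq \mathbb{Z}_q$ has size $q/2$ with complement $U^* = U + q/2 \pmod q$. Then the $q(N-1)/2$ sets $S_{r,a} = \{x^{jq+i} + a : 0 \le j \le (N-2)/q - 1,\ i \in T + r\}$ with $r \in U$, $a \in \mathrm{GF}(N-1)$, form the blocks of a BIBD with $N-1$ treatments and $q(N-1)/2$ blocks of size $N/2 - 1$. -/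
section BIBDAux

variable {F : Type} [Field F] [DecidableEq F]

/-- The cyclotomic-type block `{x^(jq+s) : j < m}`. -/
def fS (x : F) (q m s : ℕ) : Finset F :=
  (Finset.range m).image (fun j => x ^ (j * q + s))

/-- The base block `D_r`. -/
def DD (x : F) (q m : ℕ) (T : Finset ℕ) (r : ℕ) : Finset F :=
  T.biUnion (fun i => fS x q m ((i + r) % q))

/-- Number of representations of `d` as a difference of two elements of `D_r`. -/
def RR (x : F) (q m : ℕ) (T : Finset ℕ) (r : ℕ) (d : F) : ℕ :=
  (((DD x q m T r) ×ˢ (DD x q m T r)).filter (fun p => p.1 - p.2 = d)).card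

variable {x : F} {q m : ℕ}

lemma fS_add_q (hm : 0 < m) (h1 : x ^ (q * m) = 1) (s : ℕ) :
    fS x q m (s + q) = fS x q m s := by
  ext y
  simp only [fS, Finset.mem_image, Finset.mem_range]
  constructor
  · rintro ⟨j, hj, rfl⟩
    by_cases hjm : j + 1 < m
    · exact ⟨j + 1, hjm, by rw [show (j+1)*q + s = j*q + (s+q) by ring]⟩
    · have hj1 : j + 1 = m := by omega
      refine ⟨0, hm, ?_⟩
      have he : j * q + (s + q) = q * m + s := by rw [← hj1]; ring
      simp [he, pow_add, h1]
  · rintro ⟨j, hj, rfl⟩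
    by_cases hj0 : 0 < j
    · obtain ⟨j', rfl⟩ : ∃ j', j = j' + 1 := ⟨j - 1, by omega⟩
      exact ⟨j', by omega, by rw [show j'*q + (s+q) = (j'+1)*q + s by ring]⟩
    · obtain ⟨m', rfl⟩ : ∃ m', m = m' + 1 := ⟨m - 1, by omega⟩
      have hj : j = 0 := by omega
      subst hj
      refine ⟨m', by omega, ?_⟩
      have he : m' * q + (s + q) = q * (m' + 1) + s := by ring
      simp [he, pow_add, h1]

lemma fS_add_mul (hm : 0 < m) (h1 : x ^ (q * m) = 1) (s k : ℕ) :
    fS x q m (s + q * k) = fS x q m s := by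
  induction k with
  | zero => simp
  | succ k ih => rw [show s + q*(k+1) = (s + q*k) + q by ring, fS_add_q hm h1, ih]

lemma fS_congr (hm : 0 < m) (h1 : x ^ (q * m) = 1) {s s' : ℕ} (h : s % q = s' % q) :
    fS x q m s = fS x q m s' := by
  have e1 := fS_add_mul hm h1 (s % q) (s / q)
  rw [Nat.mod_add_div] at e1
  have e2 := fS_add_mul hm h1 (s' % q) (s' / q)
  rw [Nat.mod_add_div] at e2
  rw [e1, e2, h]

lemma fS_image_mul (t s : ℕ) :
    (fS x q m s).image (fun y => x ^ t * y) = fS x q m (s + t) := by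
  unfold fS
  rw [Finset.image_image]
  apply Finset.image_congr
  intro j _
  show x ^ t * x ^ (j * q + s) = x ^ (j * q + (s + t))
  rw [← pow_add]
  congr 1
  ring

lemma DD_congr (hm : 0 < m) (h1 : x ^ (q * m) = 1) {T : Finset ℕ} {r r' : ℕ}
    (h : r % q = r' % q) : DD x q m T r = DD x q m T r' := by
  unfold DD
  apply Finset.biUnion_congr rfl
  intro i _
  congr 1
  rw [Nat.add_mod, h, ← Nat.add_mod]

lemma DD_image_mul (hm : 0 < m) (h1 : x ^ (q * m) = 1) {T : Finset ℕ} (t r : ℕ) :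
    (DD x q m T r).image (fun y => x ^ t * y) = DD x q m T (r + t) := by
  classical
  unfold DD
  rw [Finset.biUnion_image]
  apply Finset.biUnion_congr rfl
  intro i _
  rw [fS_image_mul]
  apply fS_congr hm h1
  rw [Nat.mod_add_mod, Nat.mod_mod_of_dvd _ dvd_rfl]
  congr 1
  ring

lemma RR_congr (hm : 0 < m) (h1 : x ^ (q * m) = 1) {T : Finset ℕ} {r r' : ℕ}
    (h : r % q = r' % q) (d : F) : RR x q m T r d = RR x q m T r' d := by
  unfold RR
  rw [DD_congr hm h1 h]

lemma RR_mul (hm : 0 < m) (h1 : x ^ (q * m) = 1) (hx0 : x ≠ 0) {T : Finset ℕ}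
    (t r : ℕ) (d : F) : RR x q m T r d = RR x q m T (r + t) (x ^ t * d) := by
  unfold RR
  have hx' : x ^ t ≠ 0 := pow_ne_zero _ hx0
  apply Finset.card_bij (fun p _ => (x ^ t * p.1, x ^ t * p.2))
  · intro p hp
    simp only [Finset.mem_filter, Finset.mem_product] at hp ⊢
    obtain ⟨⟨h1', h2'⟩, h3'⟩ := hp
    refine ⟨⟨?_, ?_⟩, ?_⟩
    · rw [← DD_image_mul hm h1]; exact Finset.mem_image_of_mem _ h1'
    · rw [← DD_image_mul hm h1]; exact Finset.mem_image_of_mem _ h2'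
    · rw [← mul_sub, h3']
  · intro p1 hp1 p2 hp2 h
    have e1 : x ^ t * p1.1 = x ^ t * p2.1 := congrArg Prod.fst h
    have e2 : x ^ t * p1.2 = x ^ t * p2.2 := congrArg Prod.snd h
    exact Prod.ext (mul_left_cancel₀ hx' e1) (mul_left_cancel₀ hx' e2)
  · intro p hp
    simp only [Finset.mem_filter, Finset.mem_product] at hp
    obtain ⟨⟨h1', h2'⟩, h3'⟩ := hp
    rw [← DD_image_mul hm h1] at h1' h2'
    obtain ⟨e, he, hee⟩ := Finset.mem_image.mp h1'
    obtain ⟨f, hf, hff⟩ := Finset.mem_image.mp h2'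
    refine ⟨(e, f), Finset.mem_filter.mpr ⟨Finset.mem_product.mpr ⟨he, hf⟩, ?_⟩, ?_⟩
    · apply mul_left_cancel₀ hx'
      rw [mul_sub, hee, hff, h3']
    · rw [show ((e, f) : F × F).1 = e from rfl]
      exact Prod.ext (by rw [hee]) (by rw [hff])

lemma RR_negshift (hm : 0 < m) (h1 : x ^ (q * m) = 1) {T : Finset ℕ}
    {c : ℕ} (hc : x ^ c = -1) (r : ℕ) (d : F) :
    RR x q m T r d = RR x q m T (r + c) d := by
  unfold RR
  have himg : ∀ y ∈ DD x q m T r, -y ∈ DD x q m T (r + c) := by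
    intro y hy
    rw [← DD_image_mul hm h1 c r]
    exact Finset.mem_image.mpr ⟨y, hy, by rw [hc, neg_one_mul]⟩
  apply Finset.card_bij (fun p _ => (-p.2, -p.1))
  · intro p hp
    simp only [Finset.mem_filter, Finset.mem_product] at hp ⊢
    obtain ⟨⟨h1', h2'⟩, h3'⟩ := hp
    exact ⟨⟨himg _ h2', himg _ h1'⟩, by rw [neg_sub_neg, h3']⟩
  · intro p1 hp1 p2 hp2 h
    have e1 : -p1.2 = -p2.2 := congrArg Prod.fst h
    have e2 : -p1.1 = -p2.1 := congrArg Prod.snd h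
    exact Prod.ext (neg_injective e2) (neg_injective e1)
  · intro p hp
    simp only [Finset.mem_filter, Finset.mem_product] at hp
    obtain ⟨⟨h1', h2'⟩, h3'⟩ := hp
    rw [← DD_image_mul hm h1 c r] at h1' h2'
    obtain ⟨e, he, hee⟩ := Finset.mem_image.mp h1'
    obtain ⟨f, hf, hff⟩ := Finset.mem_image.mp h2'
    rw [hc, neg_one_mul] at hee hff
    refine ⟨(f, e), Finset.mem_filter.mpr ⟨Finset.mem_product.mpr ⟨hf, he⟩, ?_⟩, ?_⟩
    · rw [show ((f, e) : F × F).1 = f from rfl, show ((f, e) : F × F).2 = e from rfl]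
      rw [← h3', ← hee, ← hff]; ring
    · exact Prod.ext (by rw [show ((f,e) : F × F).2 = e from rfl, hee]) (by rw [show ((f,e) : F × F).1 = f from rfl, hff])

end BIBDAux
/-- Theorem 2.1 (second part): if moreover `(N-2)/q` is odd and `U ⊆ ℤ_q` has size
`q/2` with complement `U* = U + q/2`, then the `q(N-1)/2` sets `S_{r,a}`, `r ∈ U`,
`a ∈ GF(N-1)`, form the blocks of a BIBD(N-1, q(N-1)/2, N/2-1). -/
theorem stmt_2 (N q : ℕ) (F : Type) [Field F] [Fintype F] [DecidableEq F]
    (hNeven : Even N) (hcard : Fintype.card F = N - 1) (hNodd : Odd (N - 1))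
    (x : F) (hx : ∀ y : F, y ≠ 0 → ∃ k : ℕ, x ^ k = y)
    (hq : q ∣ N - 2) (hqeven : Even q) (hquot : Odd ((N - 2) / q))
    (T : Finset ℕ) (hT : T ⊆ Finset.range q) (hTcard : T.card = q / 2)
    (U : Finset ℕ) (hU : U ⊆ Finset.range q) (hUcard : U.card = q / 2)
    (hUcompl : Finset.range q \ U = U.image (fun i => (i + q / 2) % q))
    (S : ℕ → F → Finset F)
    (hS : ∀ r a, S r a =
      (Finset.range ((N - 2) / q) ×ˢ T).image
        (fun p => x ^ (p.1 * q + (p.2 + r) % q) + a)) :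
    (∀ r ∈ U, ∀ a : F, (S r a).card = N / 2 - 1) ∧
    ∃ lam : ℕ, ∀ u v : F, u ≠ v →
      ((U ×ˢ (Finset.univ : Finset F)).filter
        (fun p => u ∈ S p.1 p.2 ∧ v ∈ S p.1 p.2)).card = lam := by
  classical
  set m : ℕ := (N - 2) / q with hm_def
  -- basic numerics
  have hF2 : 2 ≤ Fintype.card F := Fintype.one_lt_card
  obtain ⟨N2, hN2⟩ := hNeven
  have hN4 : 4 ≤ N := by omega
  have hq0 : 0 < q := by
    rcases Nat.eq_zero_or_pos q with h | h
    · subst h; have := Nat.eq_zero_of_zero_dvd hq; omega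
    · exact h
  have hm0 : 0 < m := hquot.pos
  have hnm : q * m = N - 2 := Nat.mul_div_cancel' hq
  obtain ⟨qh, hqh⟩ := hqeven
  have hq2 : 2 ≤ q := by omega
  obtain ⟨mk, hmk⟩ := hquot
  -- x is nonzero
  have hx0 : x ≠ 0 := by
    intro h0
    have hy : ∃ y : F, y ≠ 0 ∧ y ≠ 1 := by
      have hsub : ({0, 1} : Finset F) ⊆ Finset.univ := Finset.subset_univ _
      have hc01 : ({0, 1} : Finset F).card ≤ 2 := Finset.card_le_two
      have hcu : (Finset.univ : Finset F).card = N - 1 := hcard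
      have : 0 < ((Finset.univ : Finset F) \ {0, 1}).card := by
        rw [Finset.card_sdiff_of_subset hsub]; omega
      obtain ⟨y, hy⟩ := Finset.card_pos.mp this
      simp only [Finset.mem_sdiff, Finset.mem_insert, Finset.mem_singleton] at hy
      exact ⟨y, by tauto, by tauto⟩
    obtain ⟨y, hy0, hy1⟩ := hy
    obtain ⟨k, hk⟩ := hx y hy0
    rcases Nat.eq_zero_or_pos k with hk0 | hk0
    · subst hk0; simp at hk; exact hy1 hk.symm
    · rw [h0, zero_pow (by omega)] at hk; exact hy0 hk.symm
  -- the order of x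
  set u0 : Fˣ := Units.mk0 x hx0 with hu0
  have hcardU' : Nat.card Fˣ = N - 2 := by
    rw [Nat.card_eq_fintype_card, Fintype.card_units, hcard]; omega
  have hord : orderOf u0 = N - 2 := by
    rw [← hcardU']
    apply orderOf_eq_card_of_forall_mem_zpowers
    intro y
    obtain ⟨k, hk⟩ := hx (↑y) (Units.ne_zero y)
    refine ⟨(k : ℤ), ?_⟩
    show u0 ^ (k : ℤ) = y
    rw [zpow_natCast]
    apply Units.ext
    rw [Units.val_pow_eq_pow_val, hu0, Units.val_mk0, hk]
  have hinj : ∀ a b : ℕ, x ^ a = x ^ b ↔ a % (N - 2) = b % (N - 2) := by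
    intro a b
    have h1 : x ^ a = x ^ b ↔ u0 ^ a = u0 ^ b := by
      constructor
      · intro h
        apply Units.ext
        rw [Units.val_pow_eq_pow_val, Units.val_pow_eq_pow_val, hu0, Units.val_mk0]
        exact h
      · intro h
        have := congrArg Units.val h
        rwa [Units.val_pow_eq_pow_val, Units.val_pow_eq_pow_val, hu0, Units.val_mk0] at this
    rw [h1, pow_eq_pow_iff_modEq, hord]
    exact Iff.rfl
  have hxN2 : x ^ (N - 2) = 1 := by
    have := pow_orderOf_eq_one u0
    rw [hord] at this
    have := congrArg Units.val this
    rwa [Units.val_pow_eq_pow_val, hu0, Units.val_mk0, Units.val_one] at this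
  have hx1 : x ^ (q * m) = 1 := by rw [hnm]; exact hxN2
  -- relating S to DD
  have hSD : ∀ r a, S r a = (DD x q m T r).image (fun y => y + a) := by
    intro r a
    rw [hS r a]
    ext y
    simp only [DD, fS, Finset.mem_image, Finset.mem_product, Finset.mem_biUnion,
      Finset.mem_range]
    constructor
    · rintro ⟨⟨j, i⟩, ⟨hj, hi⟩, rfl⟩
      exact ⟨x ^ (j * q + (i + r) % q), ⟨i, hi, j, hj, rfl⟩, rfl⟩
    · rintro ⟨z, ⟨i, hi, j, hj, rfl⟩, rfl⟩
      exact ⟨(j, i), ⟨hj, hi⟩, rfl⟩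
  have hmemS : ∀ r (a y : F), y ∈ S r a ↔ y - a ∈ DD x q m T r := by
    intro r a y
    rw [hSD r a]
    simp only [Finset.mem_image]
    constructor
    · rintro ⟨z, hz, rfl⟩; simpa using hz
    · intro h; exact ⟨y - a, h, by ring⟩
  -- Part 1: cardinality of the blocks
  have part1 : ∀ r ∈ U, ∀ a : F, (S r a).card = N / 2 - 1 := by
    intro r _ a
    rw [hS r a]
    rw [Finset.card_image_of_injOn ?inj]
    · rw [Finset.card_product, Finset.card_range, hTcard]
      have e : 2 * (m * (q / 2)) = N - 2 := by
        have hqh2 : q / 2 = qh := by omega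
        rw [hqh2, ← hnm, hqh]; ring
      omega
    case inj =>
      intro p hp p' hp' heq
      simp only [Finset.coe_product, Set.mem_prod, Finset.mem_coe, Finset.mem_range] at hp hp'
      obtain ⟨hp1, hp2⟩ := hp
      obtain ⟨hp1', hp2'⟩ := hp'
      have hT1 : p.2 < q := Finset.mem_range.mp (hT hp2)
      have hT2 : p'.2 < q := Finset.mem_range.mp (hT hp2')
      have heq2 : x ^ (p.1 * q + (p.2 + r) % q) = x ^ (p'.1 * q + (p'.2 + r) % q) :=
        add_right_cancel heq
      rw [hinj] at heq2
      have hs1 : (p.2 + r) % q < q := Nat.mod_lt _ hq0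
      have hs2 : (p'.2 + r) % q < q := Nat.mod_lt _ hq0
      have hlt1 : p.1 * q + (p.2 + r) % q < N - 2 := by
        rw [← hnm]
        calc p.1 * q + (p.2 + r) % q < p.1 * q + q := by omega
          _ = (p.1 + 1) * q := by ring
          _ ≤ m * q := Nat.mul_le_mul_right _ (by omega)
          _ = q * m := by ring
      have hlt2 : p'.1 * q + (p'.2 + r) % q < N - 2 := by
        rw [← hnm]
        calc p'.1 * q + (p'.2 + r) % q < p'.1 * q + q := by omega
          _ = (p'.1 + 1) * q := by ring
          _ ≤ m * q := Nat.mul_le_mul_right _ (by omega)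
          _ = q * m := by ring
      rw [Nat.mod_eq_of_lt hlt1, Nat.mod_eq_of_lt hlt2] at heq2
      -- extract components
      have hdiv : p.1 = p'.1 := by
        have d1 : (p.1 * q + (p.2 + r) % q) / q = p.1 := by
          rw [Nat.add_comm, Nat.add_mul_div_right _ _ hq0, Nat.div_eq_of_lt hs1, Nat.zero_add]
        have d2 : (p'.1 * q + (p'.2 + r) % q) / q = p'.1 := by
          rw [Nat.add_comm, Nat.add_mul_div_right _ _ hq0, Nat.div_eq_of_lt hs2, Nat.zero_add]
        rw [← d1, ← d2, heq2]
      have hmodeq : (p.2 + r) % q = (p'.2 + r) % q := by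
        have d1 : (p.1 * q + (p.2 + r) % q) % q = (p.2 + r) % q := by
          rw [Nat.add_comm, Nat.add_mul_mod_self_right, Nat.mod_mod_of_dvd _ dvd_rfl]
        have d2 : (p'.1 * q + (p'.2 + r) % q) % q = (p'.2 + r) % q := by
          rw [Nat.add_comm, Nat.add_mul_mod_self_right, Nat.mod_mod_of_dvd _ dvd_rfl]
        rw [← d1, ← d2, heq2]
      have hsnd : p.2 = p'.2 := by
        have := Nat.ModEq.add_right_cancel' r hmodeq
        rwa [Nat.ModEq, Nat.mod_eq_of_lt hT1, Nat.mod_eq_of_lt hT2] at this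
      exact Prod.ext hdiv hsnd
  refine ⟨part1, ?_⟩
  -- Part 2 setup
  have hxN2half : x ^ ((N - 2) / 2) = -1 := by
    have hh2 : (N - 2) / 2 + (N - 2) / 2 = N - 2 := by omega
    have hsq : x ^ ((N - 2) / 2) * x ^ ((N - 2) / 2) = 1 := by
      rw [← pow_add, hh2]; exact hxN2
    rcases mul_self_eq_one_iff.mp hsq with h | h
    · exfalso
      rw [show (1 : F) = x ^ 0 by rw [pow_zero]] at h
      rw [hinj] at h
      rw [Nat.mod_eq_of_lt (by omega : (N - 2) / 2 < N - 2), Nat.zero_mod] at h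
      omega
    · exact h
  have hmod : (N - 2) / 2 % q = q / 2 := by
    have hh2' : (N - 2) / 2 = qh + mk * q := by
      have e : N - 2 = (qh + mk * q) * 2 := by rw [← hnm, hmk, hqh]; ring
      omega
    rw [hh2', Nat.add_mul_mod_self_right, Nat.mod_eq_of_lt (by omega : qh < q)]
    omega
  have hshift_inj : ∀ t a b : ℕ, a < q → b < q → (a + t) % q = (b + t) % q → a = b := by
    intro t a b ha hb h
    have : a % q = b % q := Nat.ModEq.add_right_cancel' t h
    rwa [Nat.mod_eq_of_lt ha, Nat.mod_eq_of_lt hb] at this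
  have hRRhalf : ∀ r, RR x q m T r 1 = RR x q m T ((r + q / 2) % q) 1 := by
    intro r
    rw [RR_negshift hm0 hx1 hxN2half r 1]
    apply RR_congr hm0 hx1
    rw [Nat.mod_mod_of_dvd _ dvd_rfl, Nat.add_mod r ((N - 2) / 2), hmod, Nat.mod_add_mod]
  have hkey : ∀ W : Finset ℕ, W ⊆ Finset.range q →
      (Finset.range q \ W = W.image (fun i => (i + q / 2) % q)) →
      2 * ∑ w ∈ W, RR x q m T w 1 = ∑ r ∈ Finset.range q, RR x q m T r 1 := by
    intro W hWs hWc
    have hsum := Finset.sum_sdiff (f := fun r => RR x q m T r 1) hWs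
    rw [hWc, Finset.sum_image (by
      intro a ha b hb h
      exact hshift_inj _ a b (Finset.mem_range.mp (hWs ha)) (Finset.mem_range.mp (hWs hb)) h)]
      at hsum
    rw [Finset.sum_congr rfl (fun w _ => (hRRhalf w).symm)] at hsum
    rw [two_mul]
    exact hsum
  refine ⟨∑ r ∈ U, RR x q m T r 1, ?_⟩
  intro u v huv
  have hd0 : u - v ≠ 0 := sub_ne_zero.mpr huv
  obtain ⟨c, hc⟩ := hx (u - v) hd0
  set t : ℕ := (N - 2) - c % (N - 2) with ht
  have hx_td : x ^ t * (u - v) = 1 := by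
    rw [← hc, ← pow_add]
    have h1 : t + c = (N - 2) + (N - 2) * (c / (N - 2)) := by
      have h2' := Nat.mod_add_div c (N - 2)
      have h3' : c % (N - 2) < N - 2 := Nat.mod_lt _ (by omega)
      omega
    rw [h1, pow_add, hxN2, one_mul, pow_mul, hxN2, one_pow]
  -- step 1: fiberwise decomposition
  have step1 : ((U ×ˢ (Finset.univ : Finset F)).filter
      (fun p => u ∈ S p.1 p.2 ∧ v ∈ S p.1 p.2)).card
      = ∑ r ∈ U, (Finset.univ.filter (fun a : F => u ∈ S r a ∧ v ∈ S r a)).card := by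
    rw [Finset.card_eq_sum_card_fiberwise
      (f := Prod.fst) (t := U)
      (fun p hp => (Finset.mem_product.mp (Finset.mem_filter.mp hp).1).1)]
    apply Finset.sum_congr rfl
    intro r hr
    apply Finset.card_bij (fun p _ => p.2)
    · intro p hp
      simp only [Finset.mem_filter, Finset.mem_product, Finset.mem_univ, true_and] at hp ⊢
      obtain ⟨⟨_, hP⟩, hfst⟩ := hp
      rw [← hfst]
      exact hP
    · intro p1 hp1 p2 hp2 h
      simp only [Finset.mem_filter] at hp1 hp2
      exact Prod.ext (hp1.2.trans hp2.2.symm) h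
    · intro a ha
      simp only [Finset.mem_filter, Finset.mem_univ, true_and] at ha
      exact ⟨(r, a), Finset.mem_filter.mpr ⟨Finset.mem_filter.mpr
        ⟨Finset.mem_product.mpr ⟨hr, Finset.mem_univ _⟩, ha⟩, rfl⟩, rfl⟩
  -- step 2: fibers are difference counts
  have step2 : ∀ r, (Finset.univ.filter (fun a : F => u ∈ S r a ∧ v ∈ S r a)).card
      = RR x q m T r (u - v) := by
    intro r
    unfold RR
    apply Finset.card_bij (fun a _ => (u - a, v - a))
    · intro a ha
      simp only [Finset.mem_filter, Finset.mem_univ, true_and, hmemS] at ha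
      exact Finset.mem_filter.mpr ⟨Finset.mem_product.mpr ⟨ha.1, ha.2⟩,
        sub_sub_sub_cancel_right u v a⟩
    · intro a1 _ a2 _ h
      have := congrArg Prod.fst h
      simp only at this
      exact sub_right_inj.mp this
    · intro p hp
      simp only [Finset.mem_filter, Finset.mem_product] at hp
      obtain ⟨⟨he, hf⟩, hd⟩ := hp
      refine ⟨u - p.1, ?_, ?_⟩
      · simp only [Finset.mem_filter, Finset.mem_univ, true_and, hmemS]
        constructor
        · rw [sub_sub_cancel]; exact he
        · rw [show v - (u - p.1) = p.2 by linear_combination hd]; exact hf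
      · have e1 : u - (u - p.1) = p.1 := sub_sub_cancel u p.1
        have e2 : v - (u - p.1) = p.2 := by linear_combination hd
        rw [e1, e2]
  rw [step1]
  rw [Finset.sum_congr rfl (fun r _ => step2 r)]
  -- step 3: shift to difference 1
  have step3 : ∀ r, RR x q m T r (u - v) = RR x q m T ((r + t) % q) 1 := by
    intro r
    rw [RR_mul hm0 hx1 hx0 t r (u - v), hx_td]
    exact RR_congr hm0 hx1 (Nat.mod_mod_of_dvd _ dvd_rfl).symm 1
  rw [Finset.sum_congr rfl (fun r _ => step3 r)]
  -- step 4: reindex as a sum over W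
  have hinjU : ∀ a ∈ U, ∀ b ∈ U, (a + t) % q = (b + t) % q → a = b := by
    intro a ha b hb h
    exact hshift_inj t a b (Finset.mem_range.mp (hU ha)) (Finset.mem_range.mp (hU hb)) h
  set W : Finset ℕ := U.image (fun r => (r + t) % q) with hW
  have hreindex : ∑ w ∈ W, RR x q m T w 1 = ∑ r ∈ U, RR x q m T ((r + t) % q) 1 :=
    Finset.sum_image hinjU
  rw [← hreindex]
  -- W is a half-system
  have hWsub : W ⊆ Finset.range q := by
    intro w hw
    obtain ⟨r, _, rfl⟩ := Finset.mem_image.mp hw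
    exact Finset.mem_range.mpr (Nat.mod_lt _ hq0)
  have hσ_range : (Finset.range q).image (fun r => (r + t) % q) = Finset.range q := by
    apply Finset.eq_of_subset_of_card_le
    · intro w hw
      obtain ⟨r, _, rfl⟩ := Finset.mem_image.mp hw
      exact Finset.mem_range.mpr (Nat.mod_lt _ hq0)
    · rw [Finset.card_image_of_injOn (fun a ha b hb h =>
        hshift_inj t a b (Finset.mem_range.mp ha) (Finset.mem_range.mp hb) h)]
  have hcompl_img : Finset.range q \ W =
      (Finset.range q \ U).image (fun r => (r + t) % q) := by
    ext y
    constructor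
    · intro hy
      obtain ⟨hyq, hyW⟩ := Finset.mem_sdiff.mp hy
      have : y ∈ (Finset.range q).image (fun r => (r + t) % q) := by rw [hσ_range]; exact hyq
      obtain ⟨i, hi, rfl⟩ := Finset.mem_image.mp this
      refine Finset.mem_image.mpr ⟨i, Finset.mem_sdiff.mpr ⟨hi, fun hiU => hyW ?_⟩, rfl⟩
      exact Finset.mem_image.mpr ⟨i, hiU, rfl⟩
    · intro hy
      obtain ⟨i, hi, rfl⟩ := Finset.mem_image.mp hy
      obtain ⟨hiq, hiU⟩ := Finset.mem_sdiff.mp hi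
      refine Finset.mem_sdiff.mpr ⟨Finset.mem_range.mpr (Nat.mod_lt _ hq0), fun hmem => ?_⟩
      obtain ⟨i', hi'U, h⟩ := Finset.mem_image.mp hmem
      have : i' = i := hshift_inj t i' i (Finset.mem_range.mp (hU hi'U))
        (Finset.mem_range.mp hiq) h
      exact hiU (this ▸ hi'U)
  have hWc : Finset.range q \ W = W.image (fun i => (i + q / 2) % q) := by
    rw [hcompl_img, hUcompl, Finset.image_image, hW, Finset.image_image]
    apply Finset.image_congr
    intro i _
    show ((i + q / 2) % q + t) % q = ((i + t) % q + q / 2) % q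
    rw [Nat.mod_add_mod, Nat.mod_add_mod]
    congr 1
    ring
  -- conclude
  have h1 := hkey W hWsub hWc
  have h2 := hkey U hU hUcompl
  exact Nat.eq_of_mul_eq_mul_left (by norm_num) (h1.trans h2.symm)
end

section
/- Under the hypotheses of the difference-family construction ($N-1$ odd prime power, $q$ an even divisor of $N-2$ with $(N-2)/q$ odd, $x$ primitive in $\mathrm{GF}(N-1)$, $T \subseteq \mathbb{Z}_q$ of size $q/2$, $U \subseteq \mathbb{Z}_q$ of size $q/2$ with complement $U^* = U + q/2$), the multiset of differences $\bigcup_{r \in U} \bigcup_{u \ne v \in S_{r,0}} \{u - v\}$ equals the multiset of differences $\bigcup_{r \in U^*} \bigcup_{u \ne v \in S_{r,0}} \{u - v\}$, where $S_{r,0} = \{x^{jq+i} : 0 \le j \le (N-2)/q - 1,\ i \in T + r\}$. -/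
theorem diffcount (F : Type) [Field F] [Fintype F] [DecidableEq F] (A : Finset F) (d : F) :
  ((A ×ˢ A).filter (fun p => p.1 ≠ p.2 ∧ p.1 - p.2 = d)).card
  = (((A.image (fun y => -y)) ×ˢ (A.image (fun y => -y))).filter (fun p => p.1 ≠ p.2 ∧ p.1 - p.2 = d)).card := by
  apply Finset.card_bij' (fun p _ => (-p.2, -p.1)) (fun p _ => (-p.2, -p.1))
  · intro p hp; simp
  · intro p hp; simp
  · intro p hp
    simp only [Finset.mem_filter, Finset.mem_product, Finset.mem_image, ne_eq] at *
    obtain ⟨⟨h1, h2⟩, h3, h4⟩ := hp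
    refine ⟨⟨⟨p.2, h2, rfl⟩, ⟨p.1, h1, rfl⟩⟩, ?_, by linear_combination h4⟩
    intro h; exact h3 (by simpa using (neg_injective h).symm)
  · intro p hp
    simp only [Finset.mem_filter, Finset.mem_product, Finset.mem_image, ne_eq] at *
    obtain ⟨⟨⟨a, ha, ha'⟩, ⟨b, hb, hb'⟩⟩, h1, h2⟩ := hp
    rw [← ha', ← hb'] at h1 h2 ⊢
    refine ⟨⟨by simpa using hb, by simpa using ha⟩, ?_, by linear_combination h2⟩
    intro h; exact h1 (by simpa using (neg_injective (by simpa using h)).symm)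

/-- Key step in the proof of Theorem 2.1: under the same hypotheses with `(N-2)/q`
odd and `U* = U + q/2` the complement of `U`, the multiset of differences from the
blocks `S_{r,0}`, `r ∈ U`, equals (with multiplicity) the multiset of differences
from the blocks `S_{r,0}`, `r ∈ U*`. -/
theorem stmt_3 (N q : ℕ) (F : Type) [Field F] [Fintype F] [DecidableEq F]
    (hNeven : Even N) (hcard : Fintype.card F = N - 1) (hNodd : Odd (N - 1))
    (x : F) (hx : ∀ y : F, y ≠ 0 → ∃ k : ℕ, x ^ k = y)
    (hq : q ∣ N - 2) (hqeven : Even q) (hquot : Odd ((N - 2) / q))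
    (T : Finset ℕ) (hT : T ⊆ Finset.range q) (hTcard : T.card = q / 2)
    (U : Finset ℕ) (hU : U ⊆ Finset.range q) (hUcard : U.card = q / 2)
    (hUcompl : Finset.range q \ U = U.image (fun i => (i + q / 2) % q))
    (S : ℕ → F → Finset F)
    (hS : ∀ r a, S r a =
      (Finset.range ((N - 2) / q) ×ˢ T).image
        (fun p => x ^ (p.1 * q + (p.2 + r) % q) + a)) :
    ∀ d : F,
      (∑ r ∈ U,
        ((S r 0 ×ˢ S r 0).filter (fun p => p.1 ≠ p.2 ∧ p.1 - p.2 = d)).card)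
      = (∑ r ∈ Finset.range q \ U,
        ((S r 0 ×ˢ S r 0).filter (fun p => p.1 ≠ p.2 ∧ p.1 - p.2 = d)).card) := by
  intro d
  set n := N - 2 with hn
  set m := (N - 2) / q with hmdef
  -- basic numerics
  have hq0 : 0 < q := by
    rcases Nat.eq_zero_or_pos q with h | h
    · exfalso
      have : m = 0 := by rw [hmdef, h, Nat.div_zero]
      rw [this] at hquot; exact (Nat.not_odd_iff_even.mpr Even.zero) hquot
    · exact h
  obtain ⟨t, ht⟩ : ∃ t, m = 2 * t + 1 := hquot
  obtain ⟨s, hs⟩ := hqeven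
  have hs' : q = 2 * s := by omega
  have hs0 : 0 < s := by omega
  have hq2 : q / 2 = s := by omega
  have hm0 : 0 < m := by omega
  have hnm : n = m * q := by rw [hmdef]; exact (Nat.div_mul_cancel hq).symm
  have hn2 : 2 ≤ n := by nlinarith
  have hcardF : Fintype.card F = n + 1 := by
    have h1 : 1 < Fintype.card F := Fintype.one_lt_card
    omega
  -- x is nonzero
  have hx0 : x ≠ 0 := by
    have h3 : 3 ≤ Fintype.card F := by rw [hcardF]; omega
    have hne : ((Finset.univ : Finset F) \ {0, 1}).Nonempty := by
      rw [← Finset.card_pos, Finset.card_sdiff_of_subset (Finset.subset_univ _)]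
      have h4 : ({0, 1} : Finset F).card ≤ 2 := (Finset.card_insert_le _ _).trans (by simp)
      rw [Finset.card_univ]
      omega
    obtain ⟨y, hy⟩ := hne
    simp only [Finset.mem_sdiff, Finset.mem_univ, Finset.mem_insert, Finset.mem_singleton,
      true_and, not_or] at hy
    intro hx0
    obtain ⟨k, hk⟩ := hx y hy.1
    rcases k with _ | k
    · exact hy.2 (by simpa using hk.symm)
    · exact hy.1 (by rw [← hk, hx0, zero_pow (Nat.succ_ne_zero k)])
  have hxn : x ^ n = 1 := by
    have := FiniteField.pow_card_sub_one_eq_one x hx0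
    rwa [hcardF, Nat.add_sub_cancel] at this
  -- surjection counting helper
  have hcount : ∀ e : ℕ, 0 < e → x ^ e = 1 → n ≤ e := by
    intro e he hxe
    have hsub : (Finset.univ : Finset F) \ {0} ⊆ (Finset.range e).image (x ^ ·) := by
      intro y hy
      simp only [Finset.mem_sdiff, Finset.mem_univ, Finset.mem_singleton, true_and] at hy
      obtain ⟨k, hk⟩ := hx y hy
      refine Finset.mem_image.mpr ⟨k % e, Finset.mem_range.mpr (Nat.mod_lt _ he), ?_⟩
      calc x ^ (k % e) = x ^ (e * (k / e) + k % e) := by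
            rw [pow_add, pow_mul, hxe, one_pow, one_mul]
        _ = y := by rw [Nat.div_add_mod, hk]
    have h1 : ((Finset.univ : Finset F) \ {0}).card = n := by
      rw [Finset.card_sdiff_of_subset (Finset.subset_univ _), Finset.card_singleton,
        Finset.card_univ, hcardF, Nat.add_sub_cancel]
    calc n = ((Finset.univ : Finset F) \ {0}).card := h1.symm
      _ ≤ ((Finset.range e).image (x ^ ·)).card := Finset.card_le_card hsub
      _ ≤ e := (Finset.card_image_le).trans (by simp)
  -- x^(t*q+s) = -1
  have he0 : 2 * (t * q + s) = n := by rw [hnm, ht, hs']; ring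
  have hneg1 : x ^ (t * q + s) = -1 := by
    have hsq : x ^ (t * q + s) * x ^ (t * q + s) = 1 := by
      rw [← pow_add, show t * q + s + (t * q + s) = n by omega, hxn]
    rcases mul_self_eq_one_iff.mp hsq with h | h
    · exfalso
      have := hcount (t * q + s) (by omega) h
      omega
    · exact h
  -- reduce j mod m in exponents
  have hred : ∀ a c : ℕ, x ^ (a * q + c) = x ^ (a % m * q + c) := by
    intro a c
    have : a * q + c = (a % m * q + c) + n * (a / m) := by
      rw [hnm]
      conv_lhs => rw [← Nat.div_add_mod a m]
      ring
    rw [this, pow_add, pow_mul, hxn, one_pow, mul_one]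
  -- S depends on r only mod q
  have Smod : ∀ a b : ℕ, a % q = b % q → S a 0 = S b 0 := by
    intro a b hab
    rw [hS, hS]
    congr 1
    funext p
    congr 2
    rw [Nat.add_mod, hab, ← Nat.add_mod]
  -- key subset lemma
  have key : ∀ r : ℕ, (S r 0).image (fun y => -y) ⊆ S ((r + s) % q) 0 := by
    intro r y hy
    simp only [Finset.mem_image] at hy
    obtain ⟨z, hz, rfl⟩ := hy
    rw [hS] at hz ⊢
    simp only [Finset.mem_image, Finset.mem_product, Finset.mem_range, add_zero] at hz ⊢
    obtain ⟨⟨j, i⟩, ⟨hj, hi⟩, rfl⟩ := hz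
    set b := (i + r) % q with hb
    have hbq : b < q := Nat.mod_lt _ hq0
    have hmodc : (i + (r + s) % q) % q = (b + s) % q := by
      have h1 : (i + (r + s) % q) % q = (i + (r + s)) % q :=
        Nat.ModEq.add_left i (Nat.mod_modEq (r + s) q)
      have h2 : (i + (r + s)) % q = ((i + r) % q + s) % q := by
        rw [← add_assoc]
        exact (Nat.ModEq.add_right s (Nat.mod_modEq (i + r) q)).symm
      rw [h1, h2]
    have eneg : x ^ ((j + t) * q + (b + s)) = -(x ^ (j * q + b)) := by
      rw [show (j + t) * q + (b + s) = (t * q + s) + (j * q + b) by ring]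
      rw [pow_add, hneg1, neg_one_mul]
    by_cases hbs : b + s < q
    · refine ⟨((j + t) % m, i), ⟨Nat.mod_lt _ hm0, hi⟩, ?_⟩
      simp only
      rw [hmodc, Nat.mod_eq_of_lt hbs, ← hred]
      exact eneg
    · refine ⟨((j + t + 1) % m, i), ⟨Nat.mod_lt _ hm0, hi⟩, ?_⟩
      simp only
      have hbs2 : (b + s) % q = b + s - q := by
        rw [Nat.mod_eq_sub_mod (by omega), Nat.mod_eq_of_lt (by omega)]
      have h5 : (j + t + 1) * q + (b + s - q) = (j + t) * q + (b + s) := by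
        have h6 : (j + t + 1) * q = (j + t) * q + q := by ring
        omega
      rw [hmodc, hbs2, ← hred, h5]
      exact eneg
  -- upgrade to equality
  have Sneg : ∀ r : ℕ, S ((r + s) % q) 0 = (S r 0).image (fun y => -y) := by
    intro r
    apply Finset.Subset.antisymm _ (key r)
    intro y hy
    have h1 : -y ∈ ((S ((r + s) % q) 0).image (fun y => -y)) := Finset.mem_image_of_mem _ hy
    have h2 : -y ∈ S (((r + s) % q + s) % q) 0 := key _ h1
    have h3 : S (((r + s) % q + s) % q) 0 = S r 0 := by
      apply Smod
      have h4 : ((r + s) % q + s) % q = (r + s + s) % q :=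
        Nat.ModEq.add_right s (Nat.mod_modEq (r + s) q)
      rw [Nat.mod_mod_of_dvd _ (dvd_refl q), h4, show r + s + s = r + q by omega,
        Nat.add_mod_right]
    rw [h3] at h2
    exact Finset.mem_image.mpr ⟨-y, h2, neg_neg y⟩
  -- finish
  rw [hUcompl, Finset.sum_image ?hinj]
  case hinj =>
    intro a ha b hb hab
    have ha' : a < q := Finset.mem_range.mp (hU ha)
    have hb' : b < q := Finset.mem_range.mp (hU hb)
    have : a % q = b % q := Nat.ModEq.add_right_cancel' (q / 2) hab
    rwa [Nat.mod_eq_of_lt ha', Nat.mod_eq_of_lt hb'] at this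
  apply Finset.sum_congr rfl
  intro r hr
  have hSr : S ((r + q / 2) % q) 0 = (S r 0).image (fun y => -y) := by
    rw [hq2]; exact Sneg r
  rw [hSr]
  exact diffcount F (S r 0) d
end

section
/- Suppose $N-1$ is an odd prime power, $q$ is an even divisor of $N-2$ with $q \neq N-2$, $x$ is a primitive element of $\mathrm{GF}(N-1)$, and $T \subseteq \mathbb{Z}_q$ has size $q/2$. Let $e$ be the smallest positive integer with $T + e = T \pmod q$. Then the $e(N-1)$ sets $S_{r,a} = \{x^{jq+i} + a : 0 \le j \le (N-2)/q - 1,\ i \in T + r\}$ for $0 \le r \le e-1$, $a \in \mathrm{GF}(N-1)$, are pairwise distinct. -/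
/-- Theorem 2.2 (distinctness): if `q ≠ N-2` and `e` is the least positive integer
with `T + e = T` (translation mod `q`), then the `e(N-1)` blocks `S_{r,a}`,
`0 ≤ r ≤ e-1`, `a ∈ GF(N-1)`, are pairwise distinct. -/
theorem stmt_4 (N q : ℕ) (F : Type) [Field F] [Fintype F] [DecidableEq F]
    (hNeven : Even N) (hcard : Fintype.card F = N - 1) (hNodd : Odd (N - 1))
    (x : F) (hx : ∀ y : F, y ≠ 0 → ∃ k : ℕ, x ^ k = y)
    (hq : q ∣ N - 2) (hqeven : Even q) (hqne : q ≠ N - 2)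
    (T : Finset ℕ) (hT : T ⊆ Finset.range q) (hTcard : T.card = q / 2)
    (e : ℕ) (he0 : 0 < e)
    (heT : T.image (fun i => (i + e) % q) = T)
    (hemin : ∀ e', 0 < e' → T.image (fun i => (i + e') % q) = T → e ≤ e')
    (S : ℕ → F → Finset F)
    (hS : ∀ r a, S r a =
      (Finset.range ((N - 2) / q) ×ˢ T).image
        (fun p => x ^ (p.1 * q + (p.2 + r) % q) + a)) :
    ∀ r r' : ℕ, r < e → r' < e → ∀ a a' : F,
      S r a = S r' a' → r = r' ∧ a = a' := by
  -- basic numerics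
  obtain ⟨n, hn⟩ := hNeven
  have hcard2 : 2 ≤ N - 1 := hcard ▸ Fintype.one_lt_card
  have hN4 : 4 ≤ N := by
    obtain ⟨t, ht⟩ := hNodd
    omega
  have hq0 : 0 < q := by
    rcases Nat.eq_zero_or_pos q with h | h
    · subst h
      have := Nat.eq_zero_of_zero_dvd hq
      omega
    · exact h
  set m : ℕ := (N - 2) / q with hm
  have hmq : m * q = N - 2 := Nat.div_mul_cancel hq
  have hqK : q < N - 2 := lt_of_le_of_ne (Nat.le_of_dvd (by omega) hq) hqne
  have hm0 : 0 < m := by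
    rcases Nat.eq_zero_or_pos m with h | h
    · exfalso; rw [h, zero_mul] at hmq; omega
    · exact h
  -- x ≠ 0
  have hx0 : x ≠ 0 := by
    intro h
    have hne : (({0, 1} : Finset F)ᶜ).Nonempty := by
      rw [← Finset.card_pos, Finset.card_compl]
      have h2 : ({0, 1} : Finset F).card ≤ 2 :=
        Finset.card_insert_le _ _ |>.trans (by simp)
      have h3 := hcard
      omega
    obtain ⟨y, hy⟩ := hne
    simp only [Finset.mem_compl, Finset.mem_insert, Finset.mem_singleton, not_or] at hy
    obtain ⟨k, hk⟩ := hx y hy.1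
    cases k with
    | zero => simp at hk; exact hy.2 hk.symm
    | succ k => rw [h, zero_pow (Nat.succ_ne_zero k)] at hk; exact hy.1 hk.symm
  -- injectivity of powers below N-2
  have hpowinj : ∀ k l : ℕ, k < N - 2 → l < N - 2 → x ^ k = x ^ l → k = l := by
    have key : ∀ k l : ℕ, k ≤ l → l < N - 2 → x ^ k = x ^ l → k = l := by
      intro k l hkl hl hkx
      by_contra hne'
      set d := l - k with hd
      have hd0 : 0 < d := by omega
      have hxd : x ^ d = 1 := by
        have h1 : x ^ k * x ^ d = x ^ k * 1 := by
          rw [mul_one, ← pow_add, show k + d = l from by omega, hkx]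
        exact mul_left_cancel₀ (pow_ne_zero k hx0) h1
      have hsub : (Finset.univ.filter (fun y : F => y ≠ 0)) ⊆
          (Finset.range d).image (fun k => x ^ k) := by
        intro y hy
        simp only [Finset.mem_filter] at hy
        obtain ⟨k', hk'⟩ := hx y hy.2
        refine Finset.mem_image.mpr ⟨k' % d, Finset.mem_range.mpr (Nat.mod_lt _ hd0), ?_⟩
        rw [← hk']
        conv_rhs => rw [← Nat.div_add_mod k' d]
        rw [pow_add, pow_mul, hxd, one_pow, one_mul]
      have hc1 : (Finset.univ.filter (fun y : F => y ≠ 0)).card = N - 2 := by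
        have h4 : (Finset.univ.filter (fun y : F => y ≠ 0)) = ({0} : Finset F)ᶜ := by
          ext z; simp
        rw [h4, Finset.card_compl, Finset.card_singleton, hcard]
        omega
      have hc2 := Finset.card_le_card hsub
      have hc3 := Finset.card_image_le (s := Finset.range d) (f := fun k => x ^ k)
      rw [hc1] at hc2
      rw [Finset.card_range] at hc3
      omega
    intro k l hk hl hkx
    rcases le_total k l with h | h
    · exact key k l h hl hkx
    · exact (key l k h hk hkx.symm).symm
  -- x ^ (N-2) = 1
  have hone : x ^ (N - 2) = 1 := by
    have h1 : x ^ (Fintype.card F - 1) = 1 := FiniteField.pow_card_sub_one_eq_one x hx0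
    rwa [hcard, (by omega : N - 1 - 1 = N - 2)] at h1
  -- geometric sum vanishes
  have hgeo : (∑ j ∈ Finset.range m, (x ^ q) ^ j) = 0 := by
    have h1 : (x ^ q) ^ m = 1 := by rw [← pow_mul, mul_comm, hmq, hone]
    have h2 : x ^ q ≠ 1 := by
      intro h
      have := hpowinj q 0 hqK (by omega) (by simpa using h)
      omega
    have h3 := geom_sum_mul (x ^ q) m
    rw [h1, sub_self] at h3
    rcases mul_eq_zero.mp h3 with h | h
    · exact h
    · exact absurd (sub_eq_zero.mp h) h2
  -- mod-translation cancellation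
  have hmodinj : ∀ c a b : ℕ, a < q → b < q → (a + c) % q = (b + c) % q → a = b := by
    intro c a b ha hb h
    have h1 : a ≡ b [MOD q] := Nat.ModEq.add_right_cancel' c h
    have h2 : a % q = b % q := h1
    rwa [Nat.mod_eq_of_lt ha, Nat.mod_eq_of_lt hb] at h2
  -- division algorithm uniqueness
  have hdivinj : ∀ j₁ s₁ j₂ s₂ : ℕ, s₁ < q → s₂ < q →
      j₁ * q + s₁ = j₂ * q + s₂ → j₁ = j₂ ∧ s₁ = s₂ := by
    intro j₁ s₁ j₂ s₂ h1 h2 h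
    rcases lt_trichotomy j₁ j₂ with hlt | heq | hgt
    · exfalso
      have : j₁ * q + q ≤ j₂ * q := by
        calc j₁ * q + q = (j₁ + 1) * q := by ring
          _ ≤ j₂ * q := Nat.mul_le_mul_right q hlt
      omega
    · subst heq; omega
    · exfalso
      have : j₂ * q + q ≤ j₁ * q := by
        calc j₂ * q + q = (j₂ + 1) * q := by ring
          _ ≤ j₁ * q := Nat.mul_le_mul_right q hgt
      omega
  -- exponents are below N-2
  have hexplt : ∀ r : ℕ, ∀ p : ℕ × ℕ, p ∈ Finset.range m ×ˢ T →
      p.1 * q + (p.2 + r) % q < N - 2 := by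
    intro r p hp
    rw [Finset.mem_product, Finset.mem_range] at hp
    have h1 : (p.2 + r) % q < q := Nat.mod_lt _ hq0
    have h2 : p.1 * q + q ≤ m * q := by
      calc p.1 * q + q = (p.1 + 1) * q := by ring
        _ ≤ m * q := Nat.mul_le_mul_right q hp.1
    omega
  -- injectivity of the defining map of S r a on the product set
  have hinj : ∀ r : ℕ, ∀ a : F, ∀ p₁ ∈ Finset.range m ×ˢ T, ∀ p₂ ∈ Finset.range m ×ˢ T,
      x ^ (p₁.1 * q + (p₁.2 + r) % q) + a = x ^ (p₂.1 * q + (p₂.2 + r) % q) + a → p₁ = p₂ := by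
    intro r a p₁ hp₁ p₂ hp₂ h
    have h1 : x ^ (p₁.1 * q + (p₁.2 + r) % q) = x ^ (p₂.1 * q + (p₂.2 + r) % q) :=
      add_right_cancel h
    have h2 := hpowinj _ _ (hexplt r p₁ hp₁) (hexplt r p₂ hp₂) h1
    have hs1 : (p₁.2 + r) % q < q := Nat.mod_lt _ hq0
    have hs2 : (p₂.2 + r) % q < q := Nat.mod_lt _ hq0
    obtain ⟨hj, hs⟩ := hdivinj _ _ _ _ hs1 hs2 h2
    rw [Finset.mem_product] at hp₁ hp₂
    have hi1 : p₁.2 < q := Finset.mem_range.mp (hT hp₁.2)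
    have hi2 : p₂.2 < q := Finset.mem_range.mp (hT hp₂.2)
    have hi : p₁.2 = p₂.2 := hmodinj r _ _ hi1 hi2 hs
    exact Prod.ext hj hi
  -- sum of a block
  have hsum : ∀ r : ℕ, ∀ a : F, (∑ s ∈ S r a, s) = ((m * T.card : ℕ) : F) * a := by
    intro r a
    rw [hS]
    rw [Finset.sum_image (hinj r a)]
    have hsplit : (∑ p ∈ Finset.range m ×ˢ T, (x ^ (p.1 * q + (p.2 + r) % q) + a))
        = (∑ p ∈ Finset.range m ×ˢ T, x ^ (p.1 * q + (p.2 + r) % q))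
          + (Finset.range m ×ˢ T).card • a := by
      rw [Finset.sum_add_distrib, Finset.sum_const]
    rw [hsplit]
    have hzero : (∑ p ∈ Finset.range m ×ˢ T, x ^ (p.1 * q + (p.2 + r) % q)) = 0 := by
      rw [Finset.sum_product]
      have : ∀ j ∈ Finset.range m, (∑ i ∈ T, x ^ (j * q + (i + r) % q))
          = (x ^ q) ^ j * (∑ i ∈ T, x ^ ((i + r) % q)) := by
        intro j _
        rw [Finset.mul_sum]
        apply Finset.sum_congr rfl
        intro i _
        rw [pow_add, mul_comm j q, pow_mul]
      rw [Finset.sum_congr rfl this, ← Finset.sum_mul, hgeo, zero_mul]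
    rw [hzero, zero_add, Finset.card_product, Finset.card_range, nsmul_eq_mul]
  -- the scalar is nonzero
  have hcne : ((m * T.card : ℕ) : F) ≠ 0 := by
    intro h
    have h2 : ((m * T.card : ℕ) : F) * 2 = ((N - 2 : ℕ) : F) := by
      rw [hTcard]
      have : m * (q / 2) * 2 = N - 2 := by
        obtain ⟨u, hu⟩ := hqeven
        have : q / 2 = u := by omega
        rw [this]
        calc m * u * 2 = m * (u + u) := by ring
          _ = m * q := by rw [hu]
          _ = N - 2 := hmq
      rw [← this]
      push_cast
      ring
    have h3 : ((N - 1 : ℕ) : F) = 0 := by rw [← hcard]; exact Nat.cast_card_eq_zero F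
    have h4 : ((N - 2 : ℕ) : F) = -1 := by
      have : (N - 2 : ℕ) + 1 = N - 1 := by omega
      have h5 : ((N - 2 : ℕ) : F) + 1 = ((N - 1 : ℕ) : F) := by
        rw [← this]; push_cast; ring
      rw [h3] at h5
      linear_combination h5
    rw [h, h4, zero_mul] at h2
    exact one_ne_zero (neg_eq_zero.mp h2.symm)
  -- translate sets helper: extract T-image equality from S r 0 = S r' 0
  have hTimg : ∀ r₁ r₂ : ℕ, S r₁ 0 = S r₂ 0 →
      T.image (fun i => (i + r₁) % q) ⊆ T.image (fun i => (i + r₂) % q) := by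
    intro r₁ r₂ h s hs
    obtain ⟨i, hi, rfl⟩ := Finset.mem_image.mp hs
    have hmem : x ^ ((i + r₁) % q) + 0 ∈ S r₁ 0 := by
      rw [hS]
      refine Finset.mem_image.mpr ⟨(0, i), ?_, ?_⟩
      · rw [Finset.mem_product, Finset.mem_range]; exact ⟨hm0, hi⟩
      · simp
    rw [h, hS] at hmem
    obtain ⟨⟨j, i'⟩, hmem', heq⟩ := Finset.mem_image.mp hmem
    have h1 : x ^ (j * q + (i' + r₂) % q) = x ^ ((i + r₁) % q) := add_right_cancel heq
    have hlt1 : j * q + (i' + r₂) % q < N - 2 := hexplt r₂ (j, i') hmem'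
    have hlt2 : (i + r₁) % q < q := Nat.mod_lt _ hq0
    have h2 := hpowinj _ _ hlt1 (by omega) h1
    have hj0 : j = 0 := by
      by_contra hj
      have : q ≤ j * q := Nat.le_mul_of_pos_left q (Nat.pos_of_ne_zero hj)
      omega
    rw [hj0, zero_mul, zero_add] at h2
    exact Finset.mem_image.mpr ⟨i', (Finset.mem_product.mp hmem').2, h2⟩
  -- cancellation of a translation on subsets of range q
  have hcancel : ∀ c : ℕ, ∀ A B : Finset ℕ, A ⊆ Finset.range q → B ⊆ Finset.range q →
      A.image (fun i => (i + c) % q) = B.image (fun i => (i + c) % q) → A = B := by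
    intro c A B hA hB h
    ext a
    constructor
    · intro ha
      have : (a + c) % q ∈ B.image (fun i => (i + c) % q) := by
        rw [← h]; exact Finset.mem_image_of_mem _ ha
      obtain ⟨b, hb, hba⟩ := Finset.mem_image.mp this
      have : b = a := hmodinj c b a (Finset.mem_range.mp (hB hb)) (Finset.mem_range.mp (hA ha)) hba
      rwa [← this]
    · intro ha
      have : (a + c) % q ∈ A.image (fun i => (i + c) % q) := by
        rw [h]; exact Finset.mem_image_of_mem _ ha
      obtain ⟨b, hb, hba⟩ := Finset.mem_image.mp this
      have : b = a := hmodinj c b a (Finset.mem_range.mp (hA hb)) (Finset.mem_range.mp (hB ha)) hba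
      rwa [← this]
  -- from image equality deduce equality of r's
  have hrr : ∀ r₁ r₂ : ℕ, r₁ ≤ r₂ → r₂ < e →
      T.image (fun i => (i + r₁) % q) = T.image (fun i => (i + r₂) % q) → r₁ = r₂ := by
    intro r₁ r₂ hle hr₂ himg
    set d := r₂ - r₁ with hd
    rcases Nat.eq_zero_or_pos d with hd0 | hd0
    · omega
    have hkey : T.image (fun i => (i + d) % q) = T := by
      apply hcancel r₁ _ _ ?_ hT
      · rw [Finset.image_image]
        have hfun : ((fun i => (i + r₁) % q) ∘ (fun i => (i + d) % q)) =
            (fun i => (i + r₂) % q) := by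
          funext i
          show ((i + d) % q + r₁) % q = (i + r₂) % q
          rw [Nat.mod_add_mod]
          congr 1
          omega
        rw [hfun, ← himg]
      · intro s hs
        obtain ⟨i, _, rfl⟩ := Finset.mem_image.mp hs
        exact Finset.mem_range.mpr (Nat.mod_lt _ hq0)
    have := hemin d hd0 hkey
    omega
  -- main argument
  intro r r' hr hr' a a' hSS
  -- sums give a = a'
  have hsa : ((m * T.card : ℕ) : F) * a = ((m * T.card : ℕ) : F) * a' := by
    rw [← hsum r a, ← hsum r' a', hSS]
  have haa : a = a' := mul_left_cancel₀ hcne hsa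
  subst haa
  -- reduce to a = 0
  have hS0 : S r 0 = S r' 0 := by
    have himg : ∀ r₀ : ℕ, S r₀ a = (S r₀ 0).image (fun s => s + a) := by
      intro r₀
      rw [hS, hS, Finset.image_image]
      apply Finset.image_congr
      intro p _
      simp
    have h1 : (S r 0).image (fun s => s + a) = (S r' 0).image (fun s => s + a) := by
      rw [← himg, ← himg, hSS]
    exact Finset.image_injective (add_left_injective a) h1
  have himgT : T.image (fun i => (i + r) % q) = T.image (fun i => (i + r') % q) :=
    Finset.Subset.antisymm (hTimg r r' hS0) (hTimg r' r hS0.symm)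
  rcases le_total r r' with h | h
  · exact ⟨hrr r r' h hr' himgT, rfl⟩
  · exact ⟨(hrr r' r h hr himgT.symm).symm, rfl⟩
end

section
/- Let $N-1$ be an odd prime power, $q \ne N-2$ an even divisor of $N-2$, and $x$ a primitive element of $\mathrm{GF}(N-1)$. If $T, T' \subseteq \mathbb{Z}_q$ both have size $q/2$ and $T' \ne T + a$ for every $a \in \mathbb{Z}_q$, then the families of blocks $\{S_{r,a}(T)\}$ and $\{S_{r',a'}(T')\}$ (where $S_{r,a}(T) = \{x^{jq+i} + a : 0 \le j \le (N-2)/q - 1,\ i \in T + r\}$) have no block in common. -/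
/-- Theorem 2.3: if `T, T' ⊆ ℤ_q` both have size `q/2` and `T'` is not a translate
of `T`, then the two families of blocks constructed from `T` and from `T'` have no
block in common. -/
theorem stmt_5 (N q : ℕ) (F : Type) [Field F] [Fintype F] [DecidableEq F]
    (hNeven : Even N) (hcard : Fintype.card F = N - 1) (hNodd : Odd (N - 1))
    (x : F) (hx : ∀ y : F, y ≠ 0 → ∃ k : ℕ, x ^ k = y)
    (hq : q ∣ N - 2) (hqeven : Even q) (hqne : q ≠ N - 2)
    (T : Finset ℕ) (hT : T ⊆ Finset.range q) (hTcard : T.card = q / 2)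
    (T' : Finset ℕ) (hT' : T' ⊆ Finset.range q) (hT'card : T'.card = q / 2)
    (hnotrans : ∀ a < q, T' ≠ T.image (fun i => (i + a) % q))
    (S S' : ℕ → F → Finset F)
    (hS : ∀ r a, S r a =
      (Finset.range ((N - 2) / q) ×ˢ T).image
        (fun p => x ^ (p.1 * q + (p.2 + r) % q) + a))
    (hS' : ∀ r a, S' r a =
      (Finset.range ((N - 2) / q) ×ˢ T').image
        (fun p => x ^ (p.1 * q + (p.2 + r) % q) + a)) :
    ∀ r < q, ∀ r' < q, ∀ a a' : F, S r a ≠ S' r' a' := by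
  classical
  intro r hr r' hr' a a' hSS
  -- numeric setup
  have hcard2 : 2 ≤ Fintype.card F := Fintype.one_lt_card
  have hN4 : 3 ≤ N - 1 := by
    have h2 : 2 ≤ N - 1 := hcard ▸ hcard2
    rcases hNodd with ⟨t, ht⟩; omega
  have hq0 : 0 < q := by
    rcases Nat.eq_zero_or_pos q with h0 | h
    · exfalso; apply hqne; rw [h0] at hq ⊢
      have := Nat.eq_zero_of_zero_dvd hq; omega
    · exact h
  obtain ⟨m, hm⟩ := hq
  have hn0 : 0 < N - 2 := by omega
  have hm0 : 0 < m := by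
    rcases Nat.eq_zero_or_pos m with h | h
    · rw [h, Nat.mul_zero] at hm; omega
    · exact h
  have hqn : q < N - 2 := by
    have h1 : q ≤ N - 2 := Nat.le_of_dvd hn0 ⟨m, hm⟩
    omega
  have hmdiv : (N - 2) / q = m := by rw [hm, Nat.mul_div_cancel_left _ hq0]
  have hmodmul : ∀ j s : ℕ, (j * q + s) % q = s % q := by
    intro j s; rw [Nat.mul_comm, Nat.mul_add_mod]
  -- x is nonzero
  have hx0 : x ≠ 0 := by
    intro h0
    have hsub : ¬ (Finset.univ : Finset F) ⊆ {0, 1} := by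
      intro hsub
      have h1 := Finset.card_le_card hsub
      have h2 : ({0, 1} : Finset F).card ≤ 2 :=
        (Finset.card_insert_le _ _).trans (by simp)
      rw [Finset.card_univ, hcard] at h1
      omega
    obtain ⟨y, -, hy⟩ := Finset.not_subset.1 hsub
    simp only [Finset.mem_insert, Finset.mem_singleton, not_or] at hy
    obtain ⟨k, hk⟩ := hx y hy.1
    cases k with
    | zero => rw [pow_zero] at hk; exact hy.2 hk.symm
    | succ k => rw [h0, zero_pow (Nat.succ_ne_zero k)] at hk; exact hy.1 hk.symm
  -- the unit corresponding to x, and its order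
  set u : Fˣ := Units.mk0 x hx0 with hu
  have hucoe : (u : F) = x := rfl
  have hord : orderOf u = N - 2 := by
    have hall : ∀ v : Fˣ, v ∈ Subgroup.zpowers u := by
      intro v
      obtain ⟨k, hk⟩ := hx (v : F) v.ne_zero
      have hv : u ^ k = v := by
        ext; rw [Units.val_pow_eq_pow_val, hucoe, hk]
      exact hv ▸ Subgroup.pow_mem _ (Subgroup.mem_zpowers u) k
    have := orderOf_eq_card_of_forall_mem_zpowers hall
    rw [this, Nat.card_eq_fintype_card, Fintype.card_units, hcard]
    omega
  have hpow : ∀ k l : ℕ, x ^ k = x ^ l ↔ k ≡ l [MOD (N - 2)] := by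
    intro k l
    rw [← hord, ← pow_eq_pow_iff_modEq (x := u)]
    constructor
    · intro h
      ext; rw [Units.val_pow_eq_pow_val, Units.val_pow_eq_pow_val, hucoe]; exact h
    · intro h
      have := congrArg (Units.val) h
      rwa [Units.val_pow_eq_pow_val, Units.val_pow_eq_pow_val, hucoe] at this
  have hpowmod : ∀ k : ℕ, x ^ (k % (N - 2)) = x ^ k :=
    fun k => (hpow _ _).2 (Nat.mod_modEq k _)
  -- representation lemma for the blocks
  have hrep : ∀ (U : Finset ℕ) (ρ : ℕ) (b : F),
      (Finset.range m ×ˢ U).image (fun p => x ^ (p.1 * q + (p.2 + ρ) % q) + b)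
        = ((Finset.range (N - 2)).filter
            (fun k => k % q ∈ U.image (fun i => (i + ρ) % q))).image
            (fun k => x ^ k + b) := by
    intro U ρ b
    ext z
    simp only [Finset.mem_image, Finset.mem_filter, Finset.mem_range, Finset.mem_product]
    constructor
    · rintro ⟨⟨j, i⟩, ⟨hj, hi⟩, rfl⟩
      refine ⟨j * q + (i + ρ) % q, ⟨⟨?_, ?_⟩, rfl⟩⟩
      · have h1 : (i + ρ) % q < q := Nat.mod_lt _ hq0
        calc j * q + (i + ρ) % q < j * q + q := by omega
          _ = (j + 1) * q := by ring
          _ ≤ m * q := Nat.mul_le_mul_right _ (by omega)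
          _ = N - 2 := by rw [hm, Nat.mul_comm]
      · rw [hmodmul, Nat.mod_mod_of_dvd _ dvd_rfl]
        exact ⟨i, hi, rfl⟩
    · rintro ⟨k, ⟨⟨hk, hmem⟩, rfl⟩⟩
      obtain ⟨i, hi, hiq⟩ := hmem
      refine ⟨(k / q, i), ⟨?_, hi⟩, ?_⟩
      · exact Nat.div_lt_of_lt_mul (by omega)
      · simp only
        rw [hiq, Nat.div_add_mod']
  have hSrep : S r a
      = ((Finset.range (N - 2)).filter
          (fun k => k % q ∈ T.image (fun i => (i + r) % q))).image (fun k => x ^ k + a) := by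
    rw [hS, hmdiv]; exact hrep T r a
  have hS'rep : S' r' a'
      = ((Finset.range (N - 2)).filter
          (fun k => k % q ∈ T'.image (fun i => (i + r') % q))).image (fun k => x ^ k + a') := by
    rw [hS', hmdiv]; exact hrep T' r' a'
  -- membership-to-residue lemma
  have hmemres : ∀ (V : Finset ℕ) (b : F) (k : ℕ),
      x ^ k + b ∈ ((Finset.range (N - 2)).filter (fun k => k % q ∈ V)).image
          (fun k => x ^ k + b) →
      k % q ∈ V := by
    intro V b k hk
    obtain ⟨l, hl, hlk⟩ := Finset.mem_image.1 hk
    simp only [Finset.mem_filter, Finset.mem_range] at hl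
    have hxl : x ^ l = x ^ k := by
      have := hlk
      exact add_right_cancel this
    have hmod := (hpow l k).1 hxl
    have hq' : l % q = k % q := Nat.ModEq.of_dvd ⟨m, hm⟩ hmod
    rw [← hq']; exact hl.2
  by_cases haa : a = a'
  · -- Case a = a' : the residue sets agree, so T' is a translate of T
    subst haa
    have hsub : ∀ (U U' : Finset ℕ) (ρ ρ' : ℕ),
        U ⊆ Finset.range q → U' ⊆ Finset.range q →
        ((Finset.range (N - 2)).filter
            (fun k => k % q ∈ U.image (fun i => (i + ρ) % q))).image (fun k => x ^ k + a)
          = ((Finset.range (N - 2)).filter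
            (fun k => k % q ∈ U'.image (fun i => (i + ρ') % q))).image (fun k => x ^ k + a) →
        U.image (fun i => (i + ρ) % q) ⊆ U'.image (fun i => (i + ρ') % q) := by
      intro U U' ρ ρ' hU hU' heq s hs
      have hsq : s < q := by
        obtain ⟨i, -, rfl⟩ := Finset.mem_image.1 hs; exact Nat.mod_lt _ hq0
      have hsE : x ^ s + a ∈ ((Finset.range (N - 2)).filter
          (fun k => k % q ∈ U.image (fun i => (i + ρ) % q))).image (fun k => x ^ k + a) := by
        refine Finset.mem_image_of_mem _ (Finset.mem_filter.2 ⟨Finset.mem_range.2 ?_, ?_⟩)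
        · omega
        · rwa [Nat.mod_eq_of_lt hsq]
      rw [heq] at hsE
      have := hmemres _ a s hsE
      rwa [Nat.mod_eq_of_lt hsq] at this
    have hTrEq : T.image (fun i => (i + r) % q) = T'.image (fun i => (i + r') % q) := by
      apply Finset.Subset.antisymm
      · exact hsub T T' r r' hT hT' (by rw [← hSrep, ← hS'rep]; exact hSS)
      · exact hsub T' T r' r hT' hT (by rw [← hSrep, ← hS'rep]; exact hSS.symm)
    refine hnotrans ((r + (q - r')) % q) (Nat.mod_lt _ hq0) ?_
    have hshift : T' = (T'.image (fun i => (i + r') % q)).image (fun s => (s + (q - r')) % q) := by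
      ext t
      constructor
      · intro ht
        have htq : t < q := Finset.mem_range.1 (hT' ht)
        refine Finset.mem_image.2 ⟨(t + r') % q, Finset.mem_image_of_mem _ ht, ?_⟩
        rw [Nat.mod_add_mod]
        have h2 : t + r' + (q - r') = t + q := by omega
        rw [h2, Nat.add_mod_right, Nat.mod_eq_of_lt htq]
      · intro ht
        obtain ⟨s, hs, rfl⟩ := Finset.mem_image.1 ht
        obtain ⟨i, hi, rfl⟩ := Finset.mem_image.1 hs
        have hiq : i < q := Finset.mem_range.1 (hT' hi)
        have h2 : ((i + r') % q + (q - r')) % q = i := by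
          rw [Nat.mod_add_mod]
          have h3 : i + r' + (q - r') = i + q := by omega
          rw [h3, Nat.add_mod_right, Nat.mod_eq_of_lt hiq]
        rwa [h2]
    rw [hshift, ← hTrEq, Finset.image_image]
    apply Finset.image_congr
    intro i hi
    simp only [Function.comp]
    rw [Nat.mod_add_mod, Nat.add_mod_mod, Nat.add_assoc]
  · -- Case a ≠ a'
    obtain ⟨A0, hA0⟩ : ∃ A0 : Finset F, A0 = ((Finset.range (N - 2)).filter
        (fun k => k % q ∈ T.image (fun i => (i + r) % q))).image (fun k => x ^ k) := ⟨_, rfl⟩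
    obtain ⟨B0, hB0⟩ : ∃ B0 : Finset F, B0 = ((Finset.range (N - 2)).filter
        (fun k => k % q ∈ T'.image (fun i => (i + r') % q))).image (fun k => x ^ k) := ⟨_, rfl⟩
    have hS1 : S r a = A0.image (fun z => z + a) := by
      rw [hSrep, hA0, Finset.image_image]; rfl
    have hS1' : S' r' a' = B0.image (fun z => z + a') := by
      rw [hS'rep, hB0, Finset.image_image]; rfl
    -- invariance under multiplication by x^q
    have hstep : ∀ V : Finset ℕ,
        (((Finset.range (N - 2)).filter (fun k => k % q ∈ V)).image (fun k => x ^ k)).image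
            (fun z => x ^ q * z)
          = ((Finset.range (N - 2)).filter (fun k => k % q ∈ V)).image (fun k => x ^ k) := by
      intro V
      apply Finset.eq_of_subset_of_card_le
      · intro z hz
        simp only [Finset.mem_image, Finset.mem_filter, Finset.mem_range] at hz ⊢
        obtain ⟨w, ⟨k, ⟨hk1, hk2⟩, rfl⟩, rfl⟩ := hz
        refine ⟨(q + k) % (N - 2), ⟨Nat.mod_lt _ hn0, ?_⟩, ?_⟩
        · rw [Nat.mod_mod_of_dvd _ ⟨m, hm⟩, Nat.add_mod_left]; exact hk2
        · rw [hpowmod, pow_add]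
      · rw [Finset.card_image_of_injective _ (mul_right_injective₀ (pow_ne_zero q hx0))]
    have hinvA : A0.image (fun z => x ^ q * z) = A0 := by rw [hA0]; exact hstep _
    have hinvB : B0.image (fun z => x ^ q * z) = B0 := by rw [hB0]; exact hstep _
    have h1 : A0.image (fun z => z + a) = B0.image (fun z => z + a') := by
      rw [← hS1, ← hS1']; exact hSS
    have h2 : A0.image (fun z => z + x ^ q * a) = B0.image (fun z => z + x ^ q * a') := by
      have hc := congrArg (Finset.image (fun z : F => x ^ q * z)) h1
      rw [Finset.image_image, Finset.image_image] at hc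
      simp only [Function.comp_def, mul_add] at hc
      calc A0.image (fun z => z + x ^ q * a)
          = (A0.image (fun z => x ^ q * z)).image (fun z => z + x ^ q * a) := by rw [hinvA]
        _ = A0.image (fun z => x ^ q * z + x ^ q * a) := by rw [Finset.image_image]; rfl
        _ = B0.image (fun z => x ^ q * z + x ^ q * a') := hc
        _ = (B0.image (fun z => x ^ q * z)).image (fun z => z + x ^ q * a') := by
            rw [Finset.image_image]; rfl
        _ = B0.image (fun z => z + x ^ q * a') := by rw [hinvB]
    -- helper: cancel translations
    have himgadd : ∀ (W W' : Finset F) (b b' : F),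
        W.image (fun z => z + b) = W'.image (fun z => z + b') →
        W = W'.image (fun z => z + (b' - b)) := by
      intro W W' b b' hWW
      have hc := congrArg (Finset.image (fun z : F => z + (-b))) hWW
      rw [Finset.image_image, Finset.image_image] at hc
      simp only [Function.comp_def] at hc
      have e1 : (fun z : F => z + b + -b) = fun z : F => z := by
        funext z; ring
      have e2 : (fun z : F => z + b' + -b) = fun z : F => z + (b' - b) := by
        funext z; ring
      rw [e1, e2] at hc
      simpa using hc
    have h3 : A0 = B0.image (fun z => z + (a' - a)) := himgadd _ _ _ _ h1
    have h4 : A0 = B0.image (fun z => z + (x ^ q * a' - x ^ q * a)) := himgadd _ _ _ _ h2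
    have h5 : B0.image (fun z => z + (a' - a))
        = B0.image (fun z => z + (x ^ q * a' - x ^ q * a)) := h3.symm.trans h4
    have h6 : B0 = B0.image (fun z => z + ((x ^ q * a' - x ^ q * a) - (a' - a))) :=
      himgadd _ _ _ _ h5
    obtain ⟨d, hd⟩ : ∃ d : F, d = (x ^ q * a' - x ^ q * a) - (a' - a) := ⟨_, rfl⟩
    rw [← hd] at h6
    have hxq1 : x ^ q ≠ 1 := by
      intro h
      have hu1 : u ^ q = 1 := by
        ext; rw [Units.val_pow_eq_pow_val, hucoe, h]; rfl
      have := orderOf_dvd_of_pow_eq_one hu1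
      rw [hord] at this
      have := Nat.le_of_dvd hq0 this
      omega
    have hdne : d ≠ 0 := by
      have hde : d = (x ^ q - 1) * (a' - a) := by rw [hd]; ring
      rw [hde]
      exact mul_ne_zero (sub_ne_zero.2 hxq1) (sub_ne_zero.2 (Ne.symm haa))
    -- sum argument: char divides card B0
    have hsum : ∑ z ∈ B0, z = (∑ z ∈ B0, z) + B0.card • d := by
      conv_lhs => rw [h6]
      rw [Finset.sum_image (fun z _ w _ h => by exact add_right_cancel h)]
      rw [Finset.sum_add_distrib, Finset.sum_const]
    have hnsmul : (B0.card : F) * d = 0 := by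
      have h0 : (B0.card • d : F) = 0 := (left_eq_add.1 hsum)
      rwa [nsmul_eq_mul] at h0
    have hcast : (B0.card : F) = 0 := by
      rcases mul_eq_zero.1 hnsmul with h | h
      · exact h
      · exact absurd h hdne
    -- compute card B0
    have hTr'sub : ∀ s ∈ T'.image (fun i => (i + r') % q), s < q := by
      intro s hs
      obtain ⟨i, -, rfl⟩ := Finset.mem_image.1 hs
      exact Nat.mod_lt _ hq0
    have hTr'card : (T'.image (fun i => (i + r') % q)).card = q / 2 := by
      rw [Finset.card_image_of_injOn, hT'card]
      intro i hi j hj hij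
      have hiq : i < q := Finset.mem_range.1 (hT' hi)
      have hjq : j < q := Finset.mem_range.1 (hT' hj)
      have h2 : i ≡ j [MOD q] := Nat.ModEq.add_right_cancel' r' hij
      rwa [Nat.ModEq, Nat.mod_eq_of_lt hiq, Nat.mod_eq_of_lt hjq] at h2
    have hE'eq : (Finset.range (N - 2)).filter
          (fun k => k % q ∈ T'.image (fun i => (i + r') % q))
        = (Finset.range m ×ˢ (T'.image (fun i => (i + r') % q))).image
            (fun p => p.1 * q + p.2) := by
      ext k
      simp only [Finset.mem_filter, Finset.mem_range, Finset.mem_image, Finset.mem_product]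
      constructor
      · rintro ⟨hk, hmem⟩
        exact ⟨(k / q, k % q), ⟨Nat.div_lt_of_lt_mul (by omega), hmem⟩, Nat.div_add_mod' k q⟩
      · rintro ⟨⟨j, s⟩, ⟨hj, hs⟩, rfl⟩
        obtain ⟨i, hi, hiq⟩ := hs
        have hsq : s < q := by
          have : (i + r') % q < q := Nat.mod_lt _ hq0
          simpa [hiq] using this
        constructor
        · calc j * q + s < j * q + q := by omega
            _ = (j + 1) * q := by ring
            _ ≤ m * q := Nat.mul_le_mul_right _ (by omega)
            _ = N - 2 := by rw [hm, Nat.mul_comm]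
        · exact ⟨i, hi, by rw [hmodmul, Nat.mod_eq_of_lt hsq]; exact hiq⟩
    have hE'card : ((Finset.range (N - 2)).filter
          (fun k => k % q ∈ T'.image (fun i => (i + r') % q))).card = m * (q / 2) := by
      rw [hE'eq, Finset.card_image_of_injOn, Finset.card_product, Finset.card_range, hTr'card]
      rintro ⟨j₁, s₁⟩ h₁ ⟨j₂, s₂⟩ h₂ hps
      simp only [Finset.coe_product, Set.mem_prod, Finset.mem_coe, Finset.mem_range] at h₁ h₂
      have hs₁ : s₁ < q := hTr'sub s₁ h₁.2
      have hs₂ : s₂ < q := hTr'sub s₂ h₂.2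
      simp only at hps
      have hseq : s₁ = s₂ := by
        have h9 : (j₁ * q + s₁) % q = (j₂ * q + s₂) % q := by rw [hps]
        rwa [hmodmul, hmodmul, Nat.mod_eq_of_lt hs₁, Nat.mod_eq_of_lt hs₂] at h9
      subst hseq
      have hjeq : j₁ = j₂ := by
        have : j₁ * q = j₂ * q := by omega
        exact Nat.eq_of_mul_eq_mul_right hq0 this
      simp [hjeq]
    have hB0card : B0.card = m * (q / 2) := by
      rw [hB0, Finset.card_image_of_injOn, hE'card]
      intro k hk l hl hkl
      simp only [Finset.coe_filter, Set.mem_setOf_eq, Finset.mem_range] at hk hl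
      have := (hpow k l).1 hkl
      rwa [Nat.ModEq, Nat.mod_eq_of_lt hk.1, Nat.mod_eq_of_lt hl.1] at this
    -- characteristic contradiction
    haveI : CharP F (ringChar F) := ringChar.charP F
    have hp : (ringChar F).Prime := CharP.char_is_prime F _
    have hpB : (ringChar F) ∣ m * (q / 2) := by
      rw [← hB0card]
      exact (CharP.cast_eq_zero_iff F (ringChar F) _).1 hcast
    obtain ⟨e, -, hcard'⟩ := FiniteField.card F (ringChar F)
    have hpcard : (ringChar F) ∣ Fintype.card F := by
      rw [hcard']
      exact dvd_pow_self _ (by exact_mod_cast e.ne_zero)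
    have hq2 : q / 2 * 2 = q := Nat.div_mul_cancel hqeven.two_dvd
    have hpn : (ringChar F) ∣ N - 2 := by
      have he : m * (q / 2) * 2 = N - 2 := by
        rw [Nat.mul_assoc, hq2, hm, Nat.mul_comm]
      exact he ▸ Dvd.dvd.mul_right hpB 2
    have hcN : Fintype.card F = (N - 2) + 1 := by omega
    rw [hcN] at hpcard
    have h1' : (ringChar F) ∣ 1 := by
      have := Nat.dvd_sub hpcard hpn
      simpa using this
    have := Nat.dvd_one.1 h1'
    exact absurd this hp.one_lt.ne'
end

section
/- Let $\mathbf{X}$ be an $N \times m$ matrix with entries $\pm 1$ such that each column has exactly $N/2$ entries equal to $1$. Then $E(s^2) := \sum_{i<j} s_{ij}^2 / \binom{m}{2} \ge \frac{(m - N + 1) N^2}{(m-1)(N-1)}$, where $s_{ij}$ is the $(i,j)$ entry of $\mathbf{X}^T \mathbf{X}$. -/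
/-- The Nguyen–Tang–Wu lower bound: for an `N × m` matrix of `±1`'s each of whose
columns contains exactly `N/2` ones,
`E(s²) = ∑_{i<j} s_{ij}² / C(m,2) ≥ (m - N + 1) N² / ((m-1)(N-1))`. -/
theorem stmt_9 (N m : ℕ) (hNeven : Even N) (hm : N - 1 < m)
    (X : Matrix (Fin N) (Fin m) ℤ)
    (hpm : ∀ i j, X i j = 1 ∨ X i j = -1)
    (hbal : ∀ j, (Finset.univ.filter (fun i => X i j = 1)).card = N / 2) :
    (∑ p ∈ (Finset.univ : Finset (Fin m × Fin m)).filter (fun p => p.1 < p.2),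
        ((∑ k, X k p.1 * X k p.2 : ℤ) : ℝ) ^ 2) / (m.choose 2)
      ≥ ((m : ℝ) - N + 1) * N ^ 2 / (((m : ℝ) - 1) * ((N : ℝ) - 1)) := by
  classical
  rcases Nat.eq_zero_or_pos N with hN0 | hNpos
  · subst hN0
    have hrhs : ((m : ℝ) - (0:ℕ) + 1) * ((0:ℕ):ℝ) ^ 2 / (((m : ℝ) - 1) * (((0:ℕ) : ℝ) - 1)) = 0 := by
      norm_num
    rw [ge_iff_le, hrhs]
    positivity
  obtain ⟨r, hr⟩ := hNeven
  have hN2 : 2 ≤ N := by omega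
  have hmN : N ≤ m := by omega
  -- the real matrix
  set A : Matrix (Fin N) (Fin m) ℝ := Matrix.of fun a j => (X a j : ℝ) with hA
  have hA1 : ∀ a j, A a j * A a j = 1 := by
    intro a j
    rcases hpm a j with h | h <;> simp [hA, h]
  -- columns sum to zero
  have hcolZ : ∀ j, ∑ a, X a j = 0 := by
    intro j
    have hsplit := Finset.sum_filter_add_sum_filter_not Finset.univ
      (fun i => X i j = 1) (fun i => X i j)
    have h1 : ∑ i ∈ Finset.univ.filter (fun i => X i j = 1), X i j = (N / 2 : ℕ) := by
      rw [Finset.sum_congr rfl (fun i hi => (Finset.mem_filter.mp hi).2)]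
      simp [hbal j]
    have hcard2 : (Finset.univ.filter (fun i => ¬ X i j = 1)).card = N - N / 2 := by
      have h := Finset.card_filter_add_card_filter_not
        (s := (Finset.univ : Finset (Fin N))) (p := fun i => X i j = 1)
      simp only [Finset.card_univ, Fintype.card_fin] at h
      have hb := hbal j
      omega
    have h2 : ∑ i ∈ Finset.univ.filter (fun i => ¬ X i j = 1), X i j
        = -((N - N / 2 : ℕ) : ℤ) := by
      have hval : ∀ i ∈ Finset.univ.filter (fun i => ¬ X i j = 1), X i j = (-1 : ℤ) :=
        fun i hi => (hpm i j).resolve_left (Finset.mem_filter.mp hi).2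
      rw [Finset.sum_congr rfl hval, Finset.sum_const, hcard2]
      simp
    rw [h1, h2] at hsplit
    rw [← hsplit]
    omega
  have hcol : ∀ j, ∑ a : Fin N, A a j = 0 := by
    intro j
    have : ((∑ a, X a j : ℤ) : ℝ) = 0 := by rw [hcolZ j]; simp
    simpa [hA] using this
  -- Gram matrices
  set G : Matrix (Fin N) (Fin N) ℝ := A * A.transpose with hGdef
  set S : Matrix (Fin m) (Fin m) ℝ := A.transpose * A with hSdef
  have hGapp : ∀ a b, G a b = ∑ j, A a j * A b j := by
    intro a b; simp [hGdef, Matrix.mul_apply]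
  have hSapp : ∀ i j, S i j = ∑ a, A a i * A a j := by
    intro i j; simp [hSdef, Matrix.mul_apply]
  have hGsymm : ∀ a b, G b a = G a b := by
    intro a b; rw [hGapp, hGapp]
    exact Finset.sum_congr rfl fun _ _ => mul_comm _ _
  have hSsymm : ∀ i j, S j i = S i j := by
    intro i j; rw [hSapp, hSapp]
    exact Finset.sum_congr rfl fun _ _ => mul_comm _ _
  -- trace identity
  have htr : (G * G).trace = (S * S).trace := by
    rw [hGdef, hSdef, Matrix.mul_assoc, Matrix.trace_mul_comm]
    simp only [Matrix.mul_assoc]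
  have htrG : (G * G).trace = ∑ a, ∑ b, G a b ^ 2 := by
    simp only [Matrix.trace, Matrix.diag, Matrix.mul_apply]
    refine Finset.sum_congr rfl fun a _ => Finset.sum_congr rfl fun b _ => ?_
    rw [hGsymm b a, sq]
  have htrS : (S * S).trace = ∑ i, ∑ j, S i j ^ 2 := by
    simp only [Matrix.trace, Matrix.diag, Matrix.mul_apply]
    refine Finset.sum_congr rfl fun i _ => Finset.sum_congr rfl fun j _ => ?_
    rw [hSsymm j i, sq]
  have hGS : ∑ a, ∑ b, G a b ^ 2 = ∑ i, ∑ j, S i j ^ 2 := by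
    rw [← htrG, htr, htrS]
  -- diagonals
  have hGdiag : ∀ a, G a a = (m : ℝ) := by
    intro a
    rw [hGapp]
    rw [Finset.sum_congr rfl (fun j _ => hA1 a j)]
    simp
  have hSdiag : ∀ i, S i i = (N : ℝ) := by
    intro i
    rw [hSapp]
    rw [Finset.sum_congr rfl (fun a _ => hA1 a i)]
    simp
  -- row sums of G are zero
  have hGrow : ∀ a, ∑ b, G a b = 0 := by
    intro a
    simp only [hGapp]
    rw [Finset.sum_comm]
    refine Finset.sum_eq_zero fun j _ => ?_
    rw [← Finset.mul_sum, hcol j, mul_zero]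
  -- Cauchy–Schwarz on each row (off-diagonal)
  have hCS : ∀ a, ((m:ℝ))^2 ≤ ((N:ℝ) - 1) * ∑ b ∈ Finset.univ.erase a, G a b ^ 2 := by
    intro a
    have hsum : ∑ b ∈ Finset.univ.erase a, G a b = -(m : ℝ) := by
      have h : G a a + ∑ b ∈ Finset.univ.erase a, G a b = ∑ b, G a b :=
        Finset.add_sum_erase Finset.univ (fun b => G a b) (Finset.mem_univ a)
      rw [hGrow a, hGdiag a] at h
      linarith
    have hcs := Finset.sum_mul_sq_le_sq_mul_sq (Finset.univ.erase a)
      (fun _ => (1:ℝ)) (fun b => G a b)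
    simp only [one_mul, one_pow, Finset.sum_const, nsmul_eq_mul, mul_one] at hcs
    have hcard : ((Finset.univ.erase a).card : ℝ) = (N : ℝ) - 1 := by
      rw [Finset.card_erase_of_mem (Finset.mem_univ a)]
      simp only [Finset.card_univ, Fintype.card_fin]
      rw [Nat.cast_sub (by omega)]
      simp
    rw [hsum, hcard] at hcs
    calc ((m:ℝ))^2 = (-(m:ℝ))^2 := by ring
      _ ≤ _ := hcs
  -- total bound on G
  have hGtot : ∑ a, ∑ b, G a b ^ 2
      = (N : ℝ) * (m : ℝ)^2 + ∑ a, ∑ b ∈ Finset.univ.erase a, G a b ^ 2 := by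
    have h : ∀ a : Fin N, ∑ b, G a b ^ 2
        = (m:ℝ)^2 + ∑ b ∈ Finset.univ.erase a, G a b ^ 2 := by
      intro a
      have h : G a a ^ 2 + ∑ b ∈ Finset.univ.erase a, G a b ^ 2 = ∑ b, G a b ^ 2 :=
        Finset.add_sum_erase Finset.univ (fun b => G a b ^ 2) (Finset.mem_univ a)
      rw [hGdiag a] at h
      linarith
    rw [Finset.sum_congr rfl fun a _ => h a, Finset.sum_add_distrib]
    simp [mul_comm]
  have hkey : (N:ℝ) * (m:ℝ)^2
      ≤ ((N:ℝ) - 1) * (∑ a, ∑ b, G a b ^ 2 - (N : ℝ) * (m : ℝ)^2) := by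
    have h1 : ∑ a : Fin N, ((m:ℝ))^2
        ≤ ∑ a : Fin N, ((N:ℝ) - 1) * ∑ b ∈ Finset.univ.erase a, G a b ^ 2 :=
      Finset.sum_le_sum fun a _ => hCS a
    rw [← Finset.mul_sum] at h1
    have h2 : ∑ a : Fin N, ((m:ℝ))^2 = (N:ℝ) * (m:ℝ)^2 := by simp [mul_comm]
    rw [h2] at h1
    have h3 : ∑ a, ∑ b ∈ Finset.univ.erase a, G a b ^ 2
        = ∑ a, ∑ b, G a b ^ 2 - (N : ℝ) * (m : ℝ)^2 := by
      rw [hGtot]; ring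
    rw [h3] at h1
    linarith
  -- relate the statement's sum to S
  set P : ℝ := ∑ p ∈ (Finset.univ : Finset (Fin m × Fin m)).filter (fun p => p.1 < p.2),
      ((∑ k, X k p.1 * X k p.2 : ℤ) : ℝ) ^ 2 with hPdef
  have hP : P = ∑ p ∈ (Finset.univ : Finset (Fin m × Fin m)).filter (fun p => p.1 < p.2),
      S p.1 p.2 ^ 2 := by
    refine Finset.sum_congr rfl fun p _ => ?_
    rw [hSapp]
    push_cast [hA]
    rfl
  -- split the full double sum over S
  have hsplitS : ∑ i, ∑ j, S i j ^ 2 = (m : ℝ) * (N : ℝ)^2 + 2 * P := by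
    have hprod : ∑ i, ∑ j, S i j ^ 2
        = ∑ p : Fin m × Fin m, S p.1 p.2 ^ 2 := by
      rw [← Finset.sum_product']
      rfl
    have hpart := Finset.sum_filter_add_sum_filter_not (Finset.univ : Finset (Fin m × Fin m))
      (fun p => p.1 = p.2) (fun p => S p.1 p.2 ^ 2)
    have hcardDiag : ((Finset.univ : Finset (Fin m × Fin m)).filter
        (fun p => p.1 = p.2)).card = m := by
      have himg : (Finset.univ : Finset (Fin m × Fin m)).filter (fun p => p.1 = p.2)
          = Finset.univ.image (fun i : Fin m => (i, i)) := by
        ext p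
        simp only [Finset.mem_filter, Finset.mem_univ, true_and, Finset.mem_image]
        constructor
        · intro h
          exact ⟨p.1, Prod.ext rfl h⟩
        · rintro ⟨i, rfl⟩; rfl
      rw [himg, Finset.card_image_of_injective _ (fun a b h => congrArg Prod.fst h)]
      simp
    have hdiag : ∑ p ∈ (Finset.univ : Finset (Fin m × Fin m)).filter (fun p => p.1 = p.2),
        S p.1 p.2 ^ 2 = (m : ℝ) * (N : ℝ)^2 := by
      have hval : ∀ p ∈ (Finset.univ : Finset (Fin m × Fin m)).filter (fun p => p.1 = p.2),
          S p.1 p.2 ^ 2 = ((N : ℝ))^2 := by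
        intro p hp
        have hp' := (Finset.mem_filter.mp hp).2
        rw [← hp', hSdiag]
      rw [Finset.sum_congr rfl hval, Finset.sum_const, hcardDiag, nsmul_eq_mul]
    have hne : ∑ p ∈ (Finset.univ : Finset (Fin m × Fin m)).filter (fun p => ¬ p.1 = p.2),
        S p.1 p.2 ^ 2 = 2 * P := by
      have hpart2 := Finset.sum_filter_add_sum_filter_not
        ((Finset.univ : Finset (Fin m × Fin m)).filter (fun p => ¬ p.1 = p.2))
        (fun p => p.1 < p.2) (fun p => S p.1 p.2 ^ 2)
      have hfl : ((Finset.univ : Finset (Fin m × Fin m)).filter (fun p => ¬ p.1 = p.2)).filter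
          (fun p => p.1 < p.2)
          = (Finset.univ : Finset (Fin m × Fin m)).filter (fun p => p.1 < p.2) := by
        rw [Finset.filter_filter]
        apply Finset.filter_congr
        intro p _
        constructor
        · exact fun h => h.2
        · intro h; exact ⟨Fin.ne_of_lt h, h⟩
      have hfg : ((Finset.univ : Finset (Fin m × Fin m)).filter (fun p => ¬ p.1 = p.2)).filter
          (fun p => ¬ p.1 < p.2)
          = (Finset.univ : Finset (Fin m × Fin m)).filter (fun p => p.2 < p.1) := by
        rw [Finset.filter_filter]
        apply Finset.filter_congr
        intro p _
        simp only [not_lt]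
        constructor
        · intro h
          exact lt_of_le_of_ne h.2 (fun e => h.1 e.symm)
        · intro h
          exact ⟨Fin.ne_of_gt h, le_of_lt h⟩
      have hswap : ∑ p ∈ (Finset.univ : Finset (Fin m × Fin m)).filter (fun p => p.2 < p.1),
          S p.1 p.2 ^ 2
          = ∑ p ∈ (Finset.univ : Finset (Fin m × Fin m)).filter (fun p => p.1 < p.2),
          S p.1 p.2 ^ 2 := by
        refine Finset.sum_nbij' (fun p => Prod.swap p) (fun p => Prod.swap p) ?_ ?_ ?_ ?_ ?_
        · intro p hp
          simp only [Finset.mem_filter, Finset.mem_univ, true_and] at hp ⊢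
          exact hp
        · intro p hp
          simp only [Finset.mem_filter, Finset.mem_univ, true_and] at hp ⊢
          exact hp
        · intro p _; simp
        · intro p _; simp
        · intro p _
          simp only [Prod.fst_swap, Prod.snd_swap]
          rw [hSsymm]
      rw [hfl, hfg, hswap] at hpart2
      rw [← hpart2, ← hP]
      ring
    rw [hprod, ← hpart, hdiag, hne]
  -- final arithmetic
  have hkey2 : (N:ℝ)^2 * (m:ℝ) * ((m:ℝ) - (N:ℝ) + 1) ≤ 2 * P * ((N:ℝ) - 1) := by
    rw [hGS, hsplitS] at hkey
    nlinarith [hkey]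
  rw [ge_iff_le, Nat.cast_choose_two]
  have hn1 : (1:ℝ) ≤ (N:ℝ) - 1 := by
    have : (2:ℝ) ≤ (N:ℝ) := by exact_mod_cast hN2
    linarith
  have hm2 : (2:ℝ) ≤ (m:ℝ) := by
    have : ((N:ℝ)) ≤ (m:ℝ) := by exact_mod_cast hmN
    linarith
  have hd1 : (0:ℝ) < ((m:ℝ) - 1) * ((N:ℝ) - 1) := by nlinarith
  have hd2 : (0:ℝ) < (m:ℝ) * ((m:ℝ) - 1) / 2 := by nlinarith
  rw [div_le_div_iff₀ hd1 hd2]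
  nlinarith [hkey2, mul_le_mul_of_nonneg_right hkey2 (show (0:ℝ) ≤ ((m:ℝ) - 1) / 2 by linarith)]
end

section
/- Let $N$ be even, $p \le N/2$, and let $\mathbf{y} \in \mathbb{Z}^{N-1}$ be a vector whose first $p - 1$ entries are $\equiv 2 \pmod 4$ and whose last $N - p$ entries are multiples of 4. Suppose the sum $m'$ of the entries satisfies $N - 1 < |m'| < 2(N-1)$ and $\theta = (|m'| - 2p + 2)/4$ is an integer. Then $0 < \theta < N - p$, and the sum of squares of the entries of $\mathbf{y}$ is at least $4(p-1) + 16\theta$, with equality iff (when $m' < 0$) $\mathbf{y}$ has $p-1$ entries equal to $-2$, $\theta$ entries equal to $-4$, and the rest zero, or (when $m' > 0$) the analogous configuration with signs reversed. -/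
open Finset

private lemma duni {n : ℕ} (z : Fin n → ℤ) (a b : ℤ) (hab : a ≠ b) :
    Disjoint (univ.filter (fun i => z i = a)) (univ.filter (fun i => z i = b)) := by
  simp only [Finset.disjoint_left, mem_filter]
  rintro i ⟨-, h1⟩ ⟨-, h2⟩
  exact hab (h1 ▸ h2)

private lemma cover_union {n : ℕ} (z : Fin n → ℤ)
    (hcov : ∀ i, z i = -2 ∨ z i = -4 ∨ z i = 0) :
    (univ.filter (fun i => z i = -2)) ∪ (univ.filter (fun i => z i = -4))
      ∪ (univ.filter (fun i => z i = 0)) = univ := by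
  ext i
  simp only [mem_union, mem_filter, mem_univ, true_and, iff_true]
  rcases hcov i with h | h | h
  · exact Or.inl (Or.inl h)
  · exact Or.inl (Or.inr h)
  · exact Or.inr h

private lemma card_union3 {n : ℕ} (z : Fin n → ℤ) :
    ((univ.filter (fun i => z i = -2)) ∪ (univ.filter (fun i => z i = -4))
      ∪ (univ.filter (fun i => z i = 0))).card
    = (univ.filter (fun i => z i = -2)).card + (univ.filter (fun i => z i = -4)).card
      + (univ.filter (fun i => z i = 0)).card := by
  rw [Finset.card_union_of_disjoint, Finset.card_union_of_disjoint]
  · exact duni z _ _ (by norm_num)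
  · rw [Finset.disjoint_union_left]
    exact ⟨duni z _ _ (by norm_num), duni z _ _ (by norm_num)⟩

private lemma card_partition {n : ℕ} (z : Fin n → ℤ)
    (hcov : ∀ i, z i = -2 ∨ z i = -4 ∨ z i = 0) :
    (univ.filter (fun i => z i = -2)).card + (univ.filter (fun i => z i = -4)).card
      + (univ.filter (fun i => z i = 0)).card = n := by
  rw [← card_union3 z, cover_union z hcov, card_univ, Fintype.card_fin]

private lemma cover_of_card {n : ℕ} (z : Fin n → ℤ)
    (h : (univ.filter (fun i => z i = -2)).card + (univ.filter (fun i => z i = -4)).card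
      + (univ.filter (fun i => z i = 0)).card = n) :
    ∀ i, z i = -2 ∨ z i = -4 ∨ z i = 0 := by
  have hu : (univ.filter (fun i => z i = -2)) ∪ (univ.filter (fun i => z i = -4))
      ∪ (univ.filter (fun i => z i = 0)) = univ := by
    apply Finset.eq_univ_of_card
    rw [card_union3 z, h, Fintype.card_fin]
  intro i
  have := hu ▸ mem_univ i
  simp only [mem_union, mem_filter, mem_univ, true_and] at this
  tauto

private lemma sum_part {n : ℕ} (z : Fin n → ℤ)
    (hcov : ∀ i, z i = -2 ∨ z i = -4 ∨ z i = 0) (f : ℤ → ℤ) (hf : f 0 = 0) :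
    ∑ i, f (z i) = (univ.filter (fun i => z i = -2)).card * f (-2)
      + (univ.filter (fun i => z i = -4)).card * f (-4) := by
  have e2 : ∑ i ∈ univ.filter (fun i => z i = -2), f (z i)
      = (univ.filter (fun i => z i = -2)).card * f (-2) := by
    rw [Finset.sum_congr rfl (fun i hi => by rw [(mem_filter.mp hi).2]),
      Finset.sum_const, nsmul_eq_mul]
  have e4 : ∑ i ∈ univ.filter (fun i => z i = -4), f (z i)
      = (univ.filter (fun i => z i = -4)).card * f (-4) := by
    rw [Finset.sum_congr rfl (fun i hi => by rw [(mem_filter.mp hi).2]),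
      Finset.sum_const, nsmul_eq_mul]
  have e0 : ∑ i ∈ univ.filter (fun i => z i = 0), f (z i) = 0 := by
    rw [Finset.sum_congr rfl (fun i hi => by rw [(mem_filter.mp hi).2, hf])]
    exact Finset.sum_const_zero
  have key : ∑ i ∈ ((univ.filter (fun i => z i = -2)) ∪ (univ.filter (fun i => z i = -4))
      ∪ (univ.filter (fun i => z i = 0))), f (z i)
      = (univ.filter (fun i => z i = -2)).card * f (-2)
      + (univ.filter (fun i => z i = -4)).card * f (-4) := by
    rw [Finset.sum_union, Finset.sum_union, e2, e4, e0, add_zero]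
    · exact duni z _ _ (by norm_num)
    · rw [Finset.disjoint_union_left]
      exact ⟨duni z _ _ (by norm_num), duni z _ _ (by norm_num)⟩
  rw [cover_union z hcov] at key
  exact key

private lemma card_lt_filter' {n q : ℕ} (h : q ≤ n) :
    (univ.filter (fun i : Fin n => (i:ℕ) < q)).card = q := by
  apply Finset.card_eq_of_bijective (fun j hj => (⟨j, lt_of_lt_of_le hj h⟩ : Fin n))
  · rintro ⟨a, ha⟩ hain
    simp only [mem_filter] at hain
    exact ⟨a, hain.2, rfl⟩
  · intro i hi
    simp [hi]
  · intro i j hi hj hij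
    simpa using congrArg Fin.val hij

private lemma counts_core {n q : ℕ} (z : Fin n → ℤ) (hq : q ≤ n)
    (hfirst : ∀ i : Fin n, (i:ℕ) < q → z i = -2)
    (hlast : ∀ i : Fin n, q ≤ (i:ℕ) → z i = 0 ∨ z i = -4) :
    ((univ.filter (fun i => z i = -2)).card : ℤ) = q ∧
    4 * ((univ.filter (fun i => z i = -4)).card : ℤ) = -(∑ i, z i) - 2 * q ∧
    ((univ.filter (fun i => z i = 0)).card : ℤ)
      = n - q - ((univ.filter (fun i => z i = -4)).card : ℤ) := by
  have hcov : ∀ i, z i = -2 ∨ z i = -4 ∨ z i = 0 := by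
    intro i
    rcases lt_or_ge (i:ℕ) q with hi | hi
    · exact Or.inl (hfirst i hi)
    · rcases hlast i hi with h | h
      · exact Or.inr (Or.inr h)
      · exact Or.inr (Or.inl h)
  have hfe : univ.filter (fun i => z i = -2) = univ.filter (fun i : Fin n => (i:ℕ) < q) := by
    apply Finset.filter_congr
    intro i _
    constructor
    · intro h
      by_contra hlt
      rcases hlast i (le_of_not_gt hlt) with h0 | h0 <;> omega
    · exact hfirst i
  have hc2 : ((univ.filter (fun i => z i = -2)).card : ℤ) = q := by
    rw [hfe, card_lt_filter' hq]
  refine ⟨hc2, ?_, ?_⟩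
  · have hs := sum_part z hcov (fun x => x) rfl
    linarith [hs, hc2]
  · have := card_partition z hcov
    omega

private lemma rev_core {n : ℕ} (z : Fin n → ℤ)
    (hc : (univ.filter (fun i => z i = -2)).card + (univ.filter (fun i => z i = -4)).card
      + (univ.filter (fun i => z i = 0)).card = n) :
    ∑ i, (z i)^2 = 4 * ((univ.filter (fun i => z i = -2)).card : ℤ)
      + 16 * ((univ.filter (fun i => z i = -4)).card : ℤ) := by
  have h := sum_part z (cover_of_card z hc) (fun x => x^2) (by norm_num)
  rw [h]
  norm_num
  ring


set_option maxHeartbeats 2000000 in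
/-- Lemma 4.1: let `y ∈ ℤ^{N-1}` have its first `p-1` entries `≡ 2 (mod 4)` and
its remaining `N-p` entries divisible by 4, with entry sum `m'` satisfying
`N-1 < |m'| < 2(N-1)` and `θ = (|m'| - 2p + 2)/4 ∈ ℤ`. Then `0 < θ < N - p` and
`∑ yᵢ² ≥ 4(p-1) + 16θ`, with equality iff `y` consists (when `m' < 0`) of `p-1`
entries `-2`, `θ` entries `-4` and `N-p-θ` zeros, or the sign-reversed
configuration when `m' > 0`. -/
theorem stmt_14 (N p : ℕ) (hNeven : Even N) (hp1 : 1 ≤ p) (hp : p ≤ N / 2)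
    (y : Fin (N - 1) → ℤ)
    (h2 : ∀ i : Fin (N - 1), (i : ℕ) < p - 1 → y i % 4 = 2)
    (h4 : ∀ i : Fin (N - 1), p - 1 ≤ (i : ℕ) → (4 : ℤ) ∣ y i)
    (m' : ℤ) (hm' : m' = ∑ i, y i)
    (hm1 : (N : ℤ) - 1 < |m'|) (hm2 : |m'| < 2 * ((N : ℤ) - 1))
    (θ : ℤ) (hθ : 4 * θ = |m'| - 2 * p + 2) :
    0 < θ ∧ θ < (N : ℤ) - p ∧
    (∑ i, (y i) ^ 2 ≥ 4 * ((p : ℤ) - 1) + 16 * θ) ∧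
    ((∑ i, (y i) ^ 2 = 4 * ((p : ℤ) - 1) + 16 * θ) ↔
      ((m' < 0 ∧
          ((Finset.univ.filter (fun i => y i = -2)).card : ℤ) = (p : ℤ) - 1 ∧
          ((Finset.univ.filter (fun i => y i = -4)).card : ℤ) = θ ∧
          ((Finset.univ.filter (fun i => y i = 0)).card : ℤ) = (N : ℤ) - p - θ) ∨
       (0 < m' ∧
          ((Finset.univ.filter (fun i => y i = 2)).card : ℤ) = (p : ℤ) - 1 ∧
          ((Finset.univ.filter (fun i => y i = 4)).card : ℤ) = θ ∧
          ((Finset.univ.filter (fun i => y i = 0)).card : ℤ) = (N : ℤ) - p - θ))) := by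
  have hN2 : 2 ≤ N := by omega
  have h2p : 2 * (p:ℤ) ≤ (N:ℤ) := by exact_mod_cast (by omega : 2 * p ≤ N)
  have hpN : p - 1 ≤ N - 1 := by omega
  have hcastq : ((p - 1 : ℕ) : ℤ) = (p:ℤ) - 1 := by omega
  have hcastn : ((N - 1 : ℕ) : ℤ) = (N:ℤ) - 1 := by omega
  -- θ bounds
  have hθpos : 0 < θ := by
    have h1 : 1 < 4 * θ := by linarith
    omega
  have hθlt : θ < (N:ℤ) - p := by
    have h1 : 4 * θ < 2 * ((N:ℤ) - p) := by linarith
    omega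
  -- pointwise bound
  set ind : Fin (N-1) → ℤ := fun i => if (i:ℕ) < p - 1 then 4 else 0 with hind
  have hptwise : ∀ i, 4 * |y i| - ind i ≤ (y i)^2 := by
    intro i
    by_cases hi : (i:ℕ) < p - 1
    · simp only [hind, hi, if_true]
      nlinarith [sq_nonneg (|y i| - 2), sq_abs (y i)]
    · simp only [hind, hi, if_false]
      obtain ⟨k, hk⟩ := h4 i (le_of_not_gt hi)
      rcases eq_or_ne k 0 with rfl | hk0
      · simp [hk]
      · have h1 : 1 ≤ |k| := Int.one_le_abs hk0
        have habsk : |y i| = 4 * |k| := by rw [hk, abs_mul]; norm_num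
        rw [habsk, hk]
        nlinarith [sq_abs k, mul_nonneg (abs_nonneg k) (sub_nonneg.mpr h1)]
  have hsum_ind : ∑ i, ind i = 4 * ((p:ℤ) - 1) := by
    simp only [hind]
    rw [Finset.sum_ite, Finset.sum_const, Finset.sum_const_zero, add_zero,
      card_lt_filter' hpN, nsmul_eq_mul, hcastq]
    ring
  have habs : |m'| ≤ ∑ i, |y i| := by
    rw [hm']
    exact Finset.abs_sum_le_sum_abs y univ
  have hB : ∑ i, (4 * |y i| - ind i) = 4 * (∑ i, |y i|) - 4 * ((p:ℤ) - 1) := by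
    rw [Finset.sum_sub_distrib, hsum_ind, ← Finset.mul_sum]
  have hA : ∑ i, (4 * |y i| - ind i) ≤ ∑ i, (y i)^2 :=
    Finset.sum_le_sum (fun i _ => hptwise i)
  have hge : 4 * ((p:ℤ) - 1) + 16 * θ ≤ ∑ i, (y i)^2 := by linarith
  refine ⟨hθpos, hθlt, hge, ?_⟩
  have hm'ne : m' ≠ 0 := by
    intro h
    rw [h, abs_zero] at hm1
    have : (2:ℤ) ≤ (N:ℤ) := by exact_mod_cast hN2
    linarith
  constructor
  · -- forward direction
    intro heq
    have hg0 : ∀ i ∈ univ, (0:ℤ) ≤ (y i)^2 - (4 * |y i| - ind i) :=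
      fun i _ => by linarith [hptwise i]
    have hsgsum : ∑ i, ((y i)^2 - (4 * |y i| - ind i))
        = ∑ i, (y i)^2 - 4 * (∑ i, |y i|) + 4 * ((p:ℤ) - 1) := by
      rw [Finset.sum_sub_distrib, hB]; ring
    have hsumabs : ∑ i, |y i| = |m'| := by
      have hle : ∑ i, ((y i)^2 - (4 * |y i| - ind i)) ≤ 0 := by
        rw [hsgsum, heq]; linarith
      have hge0 : 0 ≤ ∑ i, ((y i)^2 - (4 * |y i| - ind i)) :=
        Finset.sum_nonneg hg0
      have h0 : ∑ i, ((y i)^2 - (4 * |y i| - ind i)) = 0 := le_antisymm hle hge0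
      rw [hsgsum, heq] at h0
      linarith
    have hgzero : ∀ i ∈ univ, (y i)^2 - (4 * |y i| - ind i) = 0 := by
      apply (Finset.sum_eq_zero_iff_of_nonneg hg0).mp
      rw [hsgsum, heq, hsumabs]; linarith
    rcases lt_or_gt_of_ne hm'ne with hneg | hpos
    · -- m' < 0
      left
      have habsm : |m'| = -m' := abs_of_neg hneg
      have hsign : ∀ i ∈ univ, |y i| + y i = 0 := by
        apply (Finset.sum_eq_zero_iff_of_nonneg (fun i _ => by
          have := neg_abs_le (y i); linarith)).mp
        rw [Finset.sum_add_distrib, hsumabs, ← hm', habsm]; ring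
      have hyle : ∀ i, y i ≤ 0 ∧ |y i| = -(y i) := by
        intro i
        have h := hsign i (mem_univ i)
        have ha := abs_nonneg (y i)
        constructor <;> linarith
      have hfirst : ∀ i : Fin (N-1), (i:ℕ) < p - 1 → y i = -2 := by
        intro i hi
        have hg := hgzero i (mem_univ i)
        simp only [hind, hi, if_true] at hg
        have hsq : (|y i| - 2)^2 = 0 := by linear_combination hg + sq_abs (y i)
        have habs2 : |y i| = 2 := by
          have := sq_eq_zero_iff.mp hsq; linarith
        have := (hyle i).2
        omega
      have hlast : ∀ i : Fin (N-1), p - 1 ≤ (i:ℕ) → y i = 0 ∨ y i = -4 := by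
        intro i hi
        have hg := hgzero i (mem_univ i)
        simp only [hind, not_lt.mpr hi, if_false, Nat.lt_irrefl] at hg
        have hdvd := h4 i hi
        obtain ⟨k, hk⟩ := hdvd
        have habsk : |y i| = 4 * |k| := by rw [hk, abs_mul]; norm_num
        rw [habsk, hk] at hg
        have hk2 : k^2 = |k| := by linarith [hg, sq_nonneg k]
        have h01 : |k| * (|k| - 1) = 0 := by linear_combination hk2 + sq_abs k
        have hk01 : k = 0 ∨ k = 1 ∨ k = -1 := by
          rcases mul_eq_zero.mp h01 with h | h
          · exact Or.inl (abs_eq_zero.mp h)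
          · have := (abs_eq (by norm_num : (0:ℤ) ≤ 1)).mp (show |k| = 1 by linarith)
            tauto
        have hy := (hyle i).1
        rw [hk] at hy ⊢
        omega
      obtain ⟨hc2, hc4, hc0⟩ := counts_core y hpN hfirst hlast
      rw [← hm'] at hc4
      rw [habsm] at hθ
      refine ⟨hneg, by rw [hc2, hcastq], ?_, ?_⟩
      · omega
      · rw [hc0, hcastn, hcastq]
        omega
    · -- m' > 0
      right
      have habsm : |m'| = m' := abs_of_pos hpos
      have hsign : ∀ i ∈ univ, |y i| - y i = 0 := by
        apply (Finset.sum_eq_zero_iff_of_nonneg (fun i _ => by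
          have := le_abs_self (y i); linarith)).mp
        rw [Finset.sum_sub_distrib, hsumabs, ← hm', habsm]; ring
      have hyge : ∀ i, 0 ≤ y i ∧ |y i| = y i := by
        intro i
        have h := hsign i (mem_univ i)
        have ha := abs_nonneg (y i)
        constructor <;> linarith
      set z : Fin (N-1) → ℤ := fun i => -(y i) with hz
      have hfirst : ∀ i : Fin (N-1), (i:ℕ) < p - 1 → z i = -2 := by
        intro i hi
        have hg := hgzero i (mem_univ i)
        simp only [hind, hi, if_true] at hg
        have hsq : (|y i| - 2)^2 = 0 := by linear_combination hg + sq_abs (y i)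
        have habs2 : |y i| = 2 := by
          have := sq_eq_zero_iff.mp hsq; linarith
        have := (hyge i).2
        simp only [hz]
        omega
      have hlast : ∀ i : Fin (N-1), p - 1 ≤ (i:ℕ) → z i = 0 ∨ z i = -4 := by
        intro i hi
        have hg := hgzero i (mem_univ i)
        simp only [hind, not_lt.mpr hi, if_false, Nat.lt_irrefl] at hg
        obtain ⟨k, hk⟩ := h4 i hi
        have habsk : |y i| = 4 * |k| := by rw [hk, abs_mul]; norm_num
        rw [habsk, hk] at hg
        have hk2 : k^2 = |k| := by linarith [hg, sq_nonneg k]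
        have h01 : |k| * (|k| - 1) = 0 := by linear_combination hk2 + sq_abs k
        have hk01 : k = 0 ∨ k = 1 ∨ k = -1 := by
          rcases mul_eq_zero.mp h01 with h | h
          · exact Or.inl (abs_eq_zero.mp h)
          · have := (abs_eq (by norm_num : (0:ℤ) ≤ 1)).mp (show |k| = 1 by linarith)
            tauto
        have hy := (hyge i).1
        simp only [hz]
        rw [hk] at hy ⊢
        omega
      obtain ⟨hc2, hc4, hc0⟩ := counts_core z hpN hfirst hlast
      have hsz : ∑ i, z i = -m' := by
        simp only [hz, Finset.sum_neg_distrib, hm']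
      have hf2 : univ.filter (fun i => z i = -2) = univ.filter (fun i => y i = 2) := by
        apply Finset.filter_congr; intro i _; simp only [hz]; omega
      have hf4 : univ.filter (fun i => z i = -4) = univ.filter (fun i => y i = 4) := by
        apply Finset.filter_congr; intro i _; simp only [hz]; omega
      have hf0 : univ.filter (fun i => z i = 0) = univ.filter (fun i => y i = 0) := by
        apply Finset.filter_congr; intro i _; simp only [hz]; omega
      rw [hf2] at hc2
      rw [hf4] at hc4
      rw [hf0, hf4] at hc0
      rw [hsz] at hc4
      rw [habsm] at hθ
      refine ⟨hpos, by rw [hc2, hcastq], ?_, ?_⟩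
      · omega
      · rw [hc0, hcastn, hcastq]
        omega
  · -- reverse direction
    rintro (⟨hneg, hc2, hc4, hc0⟩ | ⟨hpos, hc2, hc4, hc0⟩)
    · have hcard : (univ.filter (fun i => y i = -2)).card
          + (univ.filter (fun i => y i = -4)).card
          + (univ.filter (fun i => y i = 0)).card = N - 1 := by
        omega
      have := rev_core y hcard
      rw [this, hc2, hc4]
    · set z : Fin (N-1) → ℤ := fun i => -(y i) with hz
      have hf2 : univ.filter (fun i => z i = -2) = univ.filter (fun i => y i = 2) := by
        apply Finset.filter_congr; intro i _; simp only [hz]; omega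
      have hf4 : univ.filter (fun i => z i = -4) = univ.filter (fun i => y i = 4) := by
        apply Finset.filter_congr; intro i _; simp only [hz]; omega
      have hf0 : univ.filter (fun i => z i = 0) = univ.filter (fun i => y i = 0) := by
        apply Finset.filter_congr; intro i _; simp only [hz]; omega
      have hcard : (univ.filter (fun i => z i = -2)).card
          + (univ.filter (fun i => z i = -4)).card
          + (univ.filter (fun i => z i = 0)).card = N - 1 := by
        rw [hf2, hf4, hf0]
        omega
      have hsq : ∑ i, (y i)^2 = ∑ i, (z i)^2 := by
        simp [hz]
      rw [hsq, rev_core z hcard, hf2, hf4, hc2, hc4]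
end
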